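/- arXiv:2209.12903 — 8 statements merged into one kernel-verified Lean document; each statement's English description precedes it below -/
import Mathlib

section
/- Let H_b, H_B, H_A be finite-dimensional complex Hilbert spaces, L : H_b → H_B ⊗ H_A a linear map, W_b a unitary operator on H_b, ψ ∈ H_b, and ε₁ ≥ 0. If there exists a unitary operator W_B on H_B such that ‖(W_B ⊗ I_A) L ψ − L W_b ψ‖ ≤ ε₁, then ‖Tr_B[L W_b ψψ† W_b† L†] − Tr_B[L ψψ† L†]‖₁ ≤ √(2(‖Lψ‖² + ‖L W_b ψ‖²)) · ε₁. -/
open scoped BigOperators Kronecker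
open Matrix

/-- Euclidean norm of a finitely-indexed complex vector. -/
noncomputable def enorm' {n : Type*} [Fintype n] (v : n → ℂ) : ℝ :=
  Real.sqrt (∑ i, ‖v i‖ ^ 2)

/-- The rank-one operator `|v⟩⟨v|` of a vector. -/
noncomputable def outer {n : Type*} (v : n → ℂ) : Matrix n n ℂ :=
  fun i j => v i * (starRingEnd ℂ) (v j)

/-- Partial trace over the first (left) tensor factor:
`(Tr_B ρ)_{i,j} = ∑ₖ ρ_{(k,i),(k,j)}`. -/
noncomputable def ptraceLeft {a b : Type*} [Fintype a]
    (ρ : Matrix (a × b) (a × b) ℂ) : Matrix b b ℂ :=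
  fun i j => ∑ k, ρ (k, i) (k, j)

/-- Trace norm (Schatten 1-norm) `‖M‖₁ = Tr √(M†M)`, i.e. the sum of the square
roots of the eigenvalues of the positive semidefinite matrix `M†M`. -/
noncomputable def traceNorm {n : Type*} [Fintype n] [DecidableEq n]
    (M : Matrix n n ℂ) : ℝ :=
  ∑ i, Real.sqrt ((Matrix.isHermitian_conjTranspose_mul_self M).eigenvalues i)

noncomputable def Pc {B A : Type*} [Fintype A] (x : A → ℂ) (z : B × A → ℂ) : B → ℂ :=
  fun k => ∑ j, (starRingEnd ℂ) (x j) * z (k, j)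

section helpers
variable {B A n : Type*} [Fintype B] [Fintype A] [Fintype n]

lemma enorm_nonneg (v : n → ℂ) : 0 ≤ enorm' v := Real.sqrt_nonneg _

lemma enorm_sq (v : n → ℂ) : enorm' v ^ 2 = ∑ i, ‖v i‖ ^ 2 := by
  rw [enorm', Real.sq_sqrt]; positivity

lemma enorm_eq_zero_iff {v : n → ℂ} : enorm' v = 0 ↔ v = 0 := by
  rw [enorm', Real.sqrt_eq_zero (by positivity)]
  constructor
  · intro h
    funext i
    have hi : ‖v i‖ ^ 2 = 0 := by
      have := Finset.sum_eq_zero_iff_of_nonneg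
        (fun j (_ : j ∈ Finset.univ) => (by positivity : (0:ℝ) ≤ ‖v j‖ ^ 2))
      exact (this.1 h) i (Finset.mem_univ i)
    simpa using hi
  · intro h; simp [h]

lemma star_dot_self (v : n → ℂ) : star v ⬝ᵥ v = ((∑ i, ‖v i‖ ^ 2 : ℝ) : ℂ) := by
  simp [dotProduct, Complex.conj_mul', Complex.ofReal_sum]

lemma Pc_sub (x : A → ℂ) (z z' : B × A → ℂ) : Pc x (z - z') = Pc x z - Pc x z' := by
  funext k
  simp [Pc, mul_sub, Finset.sum_sub_distrib]

lemma sum3 {α β γ : Type*} [Fintype α] [Fintype β] [Fintype γ] (f : α → β → γ → ℂ) :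
    ∑ a, ∑ b, ∑ c, f a b c = ∑ c, ∑ b, ∑ a, f a b c := by
  calc ∑ a, ∑ b, ∑ c, f a b c
      = ∑ a, ∑ c, ∑ b, f a b c := Finset.sum_congr rfl fun a _ => Finset.sum_comm
    _ = ∑ c, ∑ a, ∑ b, f a b c := Finset.sum_comm
    _ = ∑ c, ∑ b, ∑ a, f a b c := Finset.sum_congr rfl fun c _ => Finset.sum_comm

lemma pair_ptrace (x y : A → ℂ) (z : B × A → ℂ) :
    star y ⬝ᵥ (ptraceLeft (outer z) *ᵥ x) = star (Pc x z) ⬝ᵥ (Pc y z) := by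
  simp only [dotProduct, ptraceLeft, outer, Pc, mulVec, Pi.star_apply, RCLike.star_def,
    map_sum, _root_.map_mul, RingHomCompTriple.comp_apply, RingHom.id_apply, Finset.mul_sum,
    Finset.sum_mul, starRingEnd_self_apply]
  rw [sum3]
  refine Finset.sum_congr rfl fun k _ => ?_
  rw [Finset.sum_comm]
  refine Finset.sum_congr rfl fun i _ => Finset.sum_congr rfl fun j _ => ?_
  ring

lemma enorm_eq_norm (v : n → ℂ) :
    enorm' v = ‖(WithLp.equiv 2 (n → ℂ)).symm v‖ := by
  rw [EuclideanSpace.norm_eq]; rfl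

lemma cs_dot (x y : B → ℂ) : ‖star x ⬝ᵥ y‖ ≤ enorm' x * enorm' y := by
  have h := norm_inner_le_norm (𝕜 := ℂ) ((WithLp.equiv 2 (B → ℂ)).symm x)
    ((WithLp.equiv 2 (B → ℂ)).symm y)
  rw [show inner ℂ ((WithLp.equiv 2 (B → ℂ)).symm x) ((WithLp.equiv 2 (B → ℂ)).symm y) = star x ⬝ᵥ y from (EuclideanSpace.inner_toLp_toLp x y).trans (dotProduct_comm _ _)] at h
  rw [enorm_eq_norm, enorm_eq_norm]
  exact h

lemma Pc_eq_inner (x : A → ℂ) (z : B × A → ℂ) (k : B) :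
    Pc x z k = @inner ℂ _ _ ((WithLp.equiv 2 (A → ℂ)).symm x)
      ((WithLp.equiv 2 (A → ℂ)).symm (fun j => z (k, j))) := by
  simp [Pc, PiLp.inner_apply, RCLike.inner_apply, mul_comm]

lemma parseval_vec (e : OrthonormalBasis A ℂ (EuclideanSpace ℂ A))
    (u : EuclideanSpace ℂ A) :
    ∑ i, ‖(@inner ℂ _ _ (e i) u : ℂ)‖ ^ 2 = ‖u‖ ^ 2 := by
  have h := e.sum_inner_mul_inner u u
  have h2 : ∀ i, (@inner ℂ _ _ u (e i) : ℂ) * @inner ℂ _ _ (e i) u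
      = ((‖(@inner ℂ _ _ (e i) u : ℂ)‖ ^ 2 : ℝ) : ℂ) := by
    intro i
    have hw : (@inner ℂ _ _ u (e i) : ℂ) = (starRingEnd ℂ) (@inner ℂ _ _ (e i) u) :=
      (inner_conj_symm _ _).symm
    rw [hw, RCLike.conj_mul]
    norm_num
  rw [Finset.sum_congr rfl (fun i _ => h2 i), @inner_self_eq_norm_sq_to_K ℂ] at h
  exact_mod_cast congrArg Complex.re h

lemma coe_symm_eq (u : EuclideanSpace ℂ A) :
    (WithLp.equiv 2 (A → ℂ)).symm (⇑u) = u := rfl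

lemma parseval (e : OrthonormalBasis A ℂ (EuclideanSpace ℂ A)) (z : B × A → ℂ) :
    ∑ i, enorm' (Pc (⇑(e i)) z) ^ 2 = enorm' z ^ 2 := by
  have hz : ∀ k, (∑ j, ‖z (k, j)‖ ^ 2)
      = ‖(WithLp.equiv 2 (A → ℂ)).symm (fun j => z (k, j))‖ ^ 2 := by
    intro k
    rw [EuclideanSpace.norm_eq, Real.sq_sqrt (by positivity)]
    rfl
  calc ∑ i, enorm' (Pc (⇑(e i)) z) ^ 2
      = ∑ i, ∑ k, ‖Pc (⇑(e i)) z k‖ ^ 2 := by simp [enorm_sq]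
    _ = ∑ k, ∑ i, ‖Pc (⇑(e i)) z k‖ ^ 2 := Finset.sum_comm
    _ = ∑ k, ‖(WithLp.equiv 2 (A → ℂ)).symm (fun j => z (k, j))‖ ^ 2 := by
        refine Finset.sum_congr rfl fun k _ => ?_
        rw [← parseval_vec e ((WithLp.equiv 2 (A → ℂ)).symm (fun j => z (k, j)))]
        refine Finset.sum_congr rfl fun i _ => ?_
        rw [Pc_eq_inner, coe_symm_eq]
    _ = enorm' z ^ 2 := by
        rw [enorm_sq, Fintype.sum_prod_type]
        exact (Finset.sum_congr rfl fun k _ => (hz k)).symm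

lemma bessel (y : A → (A → ℂ))
    (horth : Orthonormal ℂ (fun i : {i // y i ≠ 0} => (WithLp.equiv 2 (A → ℂ)).symm (y i)))
    (z : B × A → ℂ) :
    ∑ i, enorm' (Pc (y i) z) ^ 2 ≤ enorm' z ^ 2 := by
  classical
  have hz : ∀ k, (∑ j, ‖z (k, j)‖ ^ 2)
      = ‖(WithLp.equiv 2 (A → ℂ)).symm (fun j => z (k, j))‖ ^ 2 := by
    intro k
    rw [EuclideanSpace.norm_eq, Real.sq_sqrt (by positivity)]
    rfl
  have step : ∀ k, ∑ i, ‖Pc (y i) z k‖ ^ 2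
      ≤ ‖(WithLp.equiv 2 (A → ℂ)).symm (fun j => z (k, j))‖ ^ 2 := by
    intro k
    set zk := (WithLp.equiv 2 (A → ℂ)).symm (fun j => z (k, j)) with hzk
    have h1 : ∑ i, ‖Pc (y i) z k‖ ^ 2
        = ∑ i ∈ Finset.univ.filter (fun i => y i ≠ 0), ‖Pc (y i) z k‖ ^ 2 := by
      refine (Finset.sum_filter_of_ne fun i _ hne => ?_).symm
      intro h0
      apply hne
      simp [Pc, h0]
    have h2 : ∑ i ∈ Finset.univ.filter (fun i => y i ≠ 0), ‖Pc (y i) z k‖ ^ 2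
        = ∑ i : {i // y i ≠ 0}, ‖Pc (y i.1) z k‖ ^ 2 := by
      refine Finset.sum_subtype _ (fun x => ?_) _
      simp
    rw [h1, h2]
    have h3 : ∀ i : {i // y i ≠ 0}, ‖Pc (y i.1) z k‖ ^ 2
        = ‖(@inner ℂ _ _ ((WithLp.equiv 2 (A → ℂ)).symm (y i.1)) zk : ℂ)‖ ^ 2 := by
      intro i
      rw [Pc_eq_inner]
    rw [Finset.sum_congr rfl fun i _ => h3 i]
    exact horth.sum_inner_products_le zk
  calc ∑ i, enorm' (Pc (y i) z) ^ 2
      = ∑ i, ∑ k, ‖Pc (y i) z k‖ ^ 2 := by simp [enorm_sq]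
    _ = ∑ k, ∑ i, ‖Pc (y i) z k‖ ^ 2 := Finset.sum_comm
    _ ≤ ∑ k, ‖(WithLp.equiv 2 (A → ℂ)).symm (fun j => z (k, j))‖ ^ 2 :=
        Finset.sum_le_sum fun k _ => step k
    _ = enorm' z ^ 2 := by
        rw [enorm_sq, Fintype.sum_prod_type]
        exact (Finset.sum_congr rfl fun k _ => (hz k)).symm

end helpers

lemma key2 {B A : Type*} [Fintype B] [Fintype A] [DecidableEq A]
    (D : Matrix A A ℂ) (v w : B × A → ℂ)
    (hDvw : ∀ x y : A → ℂ, star y ⬝ᵥ (D *ᵥ x)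
      = star (Pc x v) ⬝ᵥ (Pc y v) - star (Pc x w) ⬝ᵥ (Pc y w)) :
    traceNorm D ≤ (enorm' v + enorm' w) * enorm' (v - w) := by
  classical
  obtain ⟨e, lam, hmul, horth, hTN⟩ :
      ∃ (e : OrthonormalBasis A ℂ (EuclideanSpace ℂ A)) (lam : A → ℝ),
        (∀ j, (Dᴴ * D) *ᵥ ⇑(e j) = lam j • ⇑(e j)) ∧
        (∀ i j, star ⇑(e i) ⬝ᵥ ⇑(e j) = if i = j then 1 else 0) ∧
        traceNorm D = ∑ i, Real.sqrt (lam i) := by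
    have h := Matrix.isHermitian_conjTranspose_mul_self D
    refine ⟨h.eigenvectorBasis, h.eigenvalues, fun j => h.mulVec_eigenvectorBasis j,
      fun i j => ?_, rfl⟩
    have horth := h.eigenvectorBasis.orthonormal
    rw [orthonormal_iff_ite] at horth
    rw [← horth i j, EuclideanSpace.inner_eq_star_dotProduct]; exact dotProduct_comm _ _
  set f : A → (A → ℂ) := fun i => D *ᵥ ⇑(e i) with hfdef
  have hfdot : ∀ i j, star (f i) ⬝ᵥ f j = ((lam j : ℝ) : ℂ) * (if i = j then 1 else 0) := by
    intro i j
    show star (D *ᵥ ⇑(e i)) ⬝ᵥ (D *ᵥ ⇑(e j)) = _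
    rw [star_mulVec, dotProduct_mulVec, vecMul_vecMul, ← dotProduct_mulVec, hmul j,
      dotProduct_smul, Complex.real_smul, horth i j]
  have hlam : ∀ i, lam i = ∑ k, ‖f i k‖ ^ 2 := by
    intro i
    have h1 := hfdot i i
    rw [if_pos rfl, mul_one, star_dot_self] at h1
    exact_mod_cast h1.symm
  have hsqrt : ∀ i, Real.sqrt (lam i) = enorm' (f i) := by
    intro i; rw [hlam i]; rfl
  set y : A → (A → ℂ) := fun i => (enorm' (f i))⁻¹ • f i with hydef
  have hyf : ∀ i, star (y i) ⬝ᵥ f i = ((enorm' (f i) : ℝ) : ℂ) := by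
    intro i
    show star ((enorm' (f i))⁻¹ • f i) ⬝ᵥ f i = _
    rw [star_smul, star_trivial, smul_dotProduct, star_dot_self, Complex.real_smul,
      ← Complex.ofReal_mul]
    norm_cast
    rw [← enorm_sq]
    rcases eq_or_ne (enorm' (f i)) 0 with h0 | h0
    · simp [h0]
    · rw [sq, ← mul_assoc, inv_mul_cancel₀ h0, one_mul]
  have hfne : ∀ i, y i ≠ 0 → enorm' (f i) ≠ 0 := by
    intro i hy h0
    apply hy
    have : f i = 0 := enorm_eq_zero_iff.mp h0
    show (enorm' (f i))⁻¹ • f i = 0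
    rw [this]; simp
  have horthy : Orthonormal ℂ
      (fun i : {i // y i ≠ 0} => (WithLp.equiv 2 (A → ℂ)).symm (y i)) := by
    rw [orthonormal_iff_ite]
    intro i j
    rw [show ∀ x y : A → ℂ, inner ℂ ((WithLp.equiv 2 (A → ℂ)).symm x) ((WithLp.equiv 2 (A → ℂ)).symm y) = star x ⬝ᵥ y from fun x y => (EuclideanSpace.inner_toLp_toLp x y).trans (dotProduct_comm _ _)]
    show star ((enorm' (f i.1))⁻¹ • f i.1) ⬝ᵥ ((enorm' (f j.1))⁻¹ • f j.1) = _
    rw [star_smul, star_trivial, smul_dotProduct, dotProduct_smul, hfdot i.1 j.1]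
    by_cases hij : i = j
    · have hij1 : i.1 = j.1 := by rw [hij]
      have hlj : lam j.1 = enorm' (f j.1) ^ 2 := by rw [hlam, ← enorm_sq]
      have hne : enorm' (f j.1) ≠ 0 := hfne j.1 j.2
      rw [hij1, if_pos rfl, if_pos hij, mul_one, hlj, Complex.real_smul, Complex.real_smul]
      have hC : ((enorm' (f j.1) : ℝ) : ℂ) ≠ 0 := by exact_mod_cast hne
      push_cast
      field_simp
    · have hij1 : i.1 ≠ j.1 := fun hc => hij (Subtype.ext hc)
      rw [if_neg hij1, if_neg hij, mul_zero, smul_zero, smul_zero]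
  have hterm : ∀ i, Real.sqrt (lam i)
      ≤ enorm' (Pc (⇑(e i)) (v - w)) * enorm' (Pc (y i) v)
        + enorm' (Pc (⇑(e i)) w) * enorm' (Pc (y i) (v - w)) := by
    intro i
    rw [hsqrt i]
    have h1 : ((enorm' (f i) : ℝ) : ℂ)
        = star (Pc (⇑(e i)) (v - w)) ⬝ᵥ (Pc (y i) v)
          + star (Pc (⇑(e i)) w) ⬝ᵥ (Pc (y i) (v - w)) := by
      rw [← hyf i]
      show star (y i) ⬝ᵥ (D *ᵥ ⇑(e i)) = _
      rw [hDvw (⇑(e i)) (y i), Pc_sub, Pc_sub, star_sub, sub_dotProduct, dotProduct_sub]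
      ring
    have h2 : enorm' (f i) = ‖((enorm' (f i) : ℝ) : ℂ)‖ := by
      rw [Complex.norm_real, Real.norm_of_nonneg (enorm_nonneg _)]
    rw [h2, h1]
    calc ‖star (Pc (⇑(e i)) (v - w)) ⬝ᵥ (Pc (y i) v)
            + star (Pc (⇑(e i)) w) ⬝ᵥ (Pc (y i) (v - w))‖
        ≤ ‖star (Pc (⇑(e i)) (v - w)) ⬝ᵥ (Pc (y i) v)‖
          + ‖star (Pc (⇑(e i)) w) ⬝ᵥ (Pc (y i) (v - w))‖ := norm_add_le _ _
      _ ≤ enorm' (Pc (⇑(e i)) (v - w)) * enorm' (Pc (y i) v)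
          + enorm' (Pc (⇑(e i)) w) * enorm' (Pc (y i) (v - w)) :=
          add_le_add (cs_dot _ _) (cs_dot _ _)
  have hsum1 : ∑ i, enorm' (Pc (⇑(e i)) (v - w)) * enorm' (Pc (y i) v)
      ≤ enorm' (v - w) * enorm' v := by
    calc ∑ i, enorm' (Pc (⇑(e i)) (v - w)) * enorm' (Pc (y i) v)
        ≤ Real.sqrt (∑ i, enorm' (Pc (⇑(e i)) (v - w)) ^ 2)
          * Real.sqrt (∑ i, enorm' (Pc (y i) v) ^ 2) :=
          Real.sum_mul_le_sqrt_mul_sqrt _ _ _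
      _ ≤ enorm' (v - w) * enorm' v := by
          rw [parseval e (v - w), Real.sqrt_sq (enorm_nonneg _)]
          refine mul_le_mul_of_nonneg_left ?_ (enorm_nonneg _)
          calc Real.sqrt (∑ i, enorm' (Pc (y i) v) ^ 2)
              ≤ Real.sqrt (enorm' v ^ 2) := Real.sqrt_le_sqrt (bessel y horthy v)
            _ = enorm' v := Real.sqrt_sq (enorm_nonneg _)
  have hsum2 : ∑ i, enorm' (Pc (⇑(e i)) w) * enorm' (Pc (y i) (v - w))
      ≤ enorm' w * enorm' (v - w) := by
    calc ∑ i, enorm' (Pc (⇑(e i)) w) * enorm' (Pc (y i) (v - w))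
        ≤ Real.sqrt (∑ i, enorm' (Pc (⇑(e i)) w) ^ 2)
          * Real.sqrt (∑ i, enorm' (Pc (y i) (v - w)) ^ 2) :=
          Real.sum_mul_le_sqrt_mul_sqrt _ _ _
      _ ≤ enorm' w * enorm' (v - w) := by
          rw [parseval e w, Real.sqrt_sq (enorm_nonneg _)]
          refine mul_le_mul_of_nonneg_left ?_ (enorm_nonneg _)
          calc Real.sqrt (∑ i, enorm' (Pc (y i) (v - w)) ^ 2)
              ≤ Real.sqrt (enorm' (v - w) ^ 2) := Real.sqrt_le_sqrt (bessel y horthy (v - w))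
            _ = enorm' (v - w) := Real.sqrt_sq (enorm_nonneg _)
  calc traceNorm D = ∑ i, Real.sqrt (lam i) := hTN
    _ ≤ ∑ i, (enorm' (Pc (⇑(e i)) (v - w)) * enorm' (Pc (y i) v)
          + enorm' (Pc (⇑(e i)) w) * enorm' (Pc (y i) (v - w))) :=
        Finset.sum_le_sum fun i _ => hterm i
    _ = (∑ i, enorm' (Pc (⇑(e i)) (v - w)) * enorm' (Pc (y i) v))
        + ∑ i, enorm' (Pc (⇑(e i)) w) * enorm' (Pc (y i) (v - w)) := Finset.sum_add_distrib
    _ ≤ enorm' (v - w) * enorm' v + enorm' w * enorm' (v - w) := add_le_add hsum1 hsum2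
    _ = (enorm' v + enorm' w) * enorm' (v - w) := by ring

lemma enorm'_sub_rev {n : Type*} [Fintype n] (x y : n → ℂ) : enorm' (x - y) = enorm' (y - x) := by
  unfold enorm'
  congr 1
  refine Finset.sum_congr rfl fun i _ => ?_
  rw [Pi.sub_apply, Pi.sub_apply, norm_sub_rev]

lemma kron_mulVec {B A : Type*} [Fintype B] [Fintype A] [DecidableEq A]
    (WB : Matrix B B ℂ) (u : B × A → ℂ) (k : B) (i : A) :
    ((WB ⊗ₖ (1 : Matrix A A ℂ)) *ᵥ u) (k, i) = ∑ l, WB k l * u (l, i) := by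
  rw [mulVec, dotProduct, Fintype.sum_prod_type]
  refine Finset.sum_congr rfl fun l _ => ?_
  rw [Finset.sum_eq_single i] <;>
    simp +contextual [Matrix.one_apply, eq_comm]

lemma ptrace_unitary_inv {B A : Type*} [Fintype B] [Fintype A] [DecidableEq A] [DecidableEq B]
    (WB : Matrix B B ℂ) (hWB : WB ∈ Matrix.unitaryGroup B ℂ) (u : B × A → ℂ) :
    ptraceLeft (outer ((WB ⊗ₖ (1 : Matrix A A ℂ)) *ᵥ u)) = ptraceLeft (outer u) := by
  have h1 : star WB * WB = 1 := hWB.1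
  have hU : ∀ l m, (∑ k, (starRingEnd ℂ) (WB k m) * WB k l) = if m = l then 1 else 0 := by
    intro l m
    have h2 := congrFun (congrFun h1 m) l
    rw [Matrix.mul_apply, Matrix.one_apply] at h2
    rw [← h2]
    refine Finset.sum_congr rfl fun k _ => ?_
    rw [Matrix.star_apply]
    rfl
  funext i j
  show ∑ k, ((WB ⊗ₖ (1 : Matrix A A ℂ)) *ᵥ u) (k, i)
      * (starRingEnd ℂ) (((WB ⊗ₖ (1 : Matrix A A ℂ)) *ᵥ u) (k, j)) = _
  have expand : ∀ k, ((WB ⊗ₖ (1 : Matrix A A ℂ)) *ᵥ u) (k, i)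
      * (starRingEnd ℂ) (((WB ⊗ₖ (1 : Matrix A A ℂ)) *ᵥ u) (k, j))
      = ∑ l, ∑ m, (WB k l * u (l, i)) * ((starRingEnd ℂ) (WB k m)
        * (starRingEnd ℂ) (u (m, j))) := by
    intro k
    rw [kron_mulVec, kron_mulVec, map_sum, Finset.sum_mul_sum]
    exact Finset.sum_congr rfl fun l _ => Finset.sum_congr rfl fun m _ => by
      rw [_root_.map_mul]
  rw [Finset.sum_congr rfl fun k _ => expand k]
  rw [sum3]
  calc ∑ m, ∑ l, ∑ k, WB k l * u (l, i) * ((starRingEnd ℂ) (WB k m) * (starRingEnd ℂ) (u (m, j)))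
      = ∑ m, ∑ l, (∑ k, (starRingEnd ℂ) (WB k m) * WB k l) * (u (l, i)
        * (starRingEnd ℂ) (u (m, j))) := by
        refine Finset.sum_congr rfl fun m _ => Finset.sum_congr rfl fun l _ => ?_
        rw [Finset.sum_mul]
        exact Finset.sum_congr rfl fun k _ => by ring
    _ = ∑ m, ∑ l, (if m = l then (1:ℂ) else 0) * (u (l, i) * (starRingEnd ℂ) (u (m, j))) := by
        refine Finset.sum_congr rfl fun m _ => Finset.sum_congr rfl fun l _ => ?_
        rw [hU l m]
    _ = ∑ k, u (k, i) * (starRingEnd ℂ) (u (k, j)) := by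
        refine Finset.sum_congr rfl fun m _ => ?_
        simp [ite_mul]

lemma enorm_sq_via_ptrace {B A : Type*} [Fintype B] [Fintype A] (z : B × A → ℂ) :
    enorm' z ^ 2 = ∑ i, (ptraceLeft (outer z) i i).re := by
  rw [enorm_sq, Fintype.sum_prod_type, Finset.sum_comm]
  refine Finset.sum_congr rfl fun i _ => ?_
  show ∑ k, ‖z (k, i)‖ ^ 2 = (∑ k, z (k, i) * (starRingEnd ℂ) (z (k, i))).re
  rw [Complex.re_sum]
  refine Finset.sum_congr rfl fun k _ => ?_
  rw [Complex.mul_conj, Complex.ofReal_re, Complex.normSq_eq_norm_sq]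

lemma add_le_sqrt_two_mul {a b : ℝ} (ha : 0 ≤ a) (hb : 0 ≤ b) :
    a + b ≤ Real.sqrt (2 * (b ^ 2 + a ^ 2)) := by
  have h : (a + b) ^ 2 ≤ 2 * (b ^ 2 + a ^ 2) := by nlinarith [sq_nonneg (a - b)]
  calc a + b = Real.sqrt ((a + b) ^ 2) := (Real.sqrt_sq (by positivity)).symm
    _ ≤ Real.sqrt (2 * (b ^ 2 + a ^ 2)) := Real.sqrt_le_sqrt h

/-- **(1) ⇒ (2) of the state-specific reconstruction theorem (Theorem 1,
Akers–Penington).** If there is a unitary `W_B` on `H_B` with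
`‖(W_B ⊗ I_A) L ψ − L W_b ψ‖ ≤ ε₁`, then the decoupling condition
`‖Tr_B[L W_b ψψ† W_b† L†] − Tr_B[L ψψ† L†]‖₁ ≤ √(2(‖Lψ‖² + ‖L W_b ψ‖²)) ε₁` holds. -/
theorem reconstruction_implies_decoupling
    {b B A : Type*} [Fintype b] [DecidableEq b] [Fintype B] [DecidableEq B]
    [Fintype A] [DecidableEq A]
    (L : Matrix (B × A) b ℂ)
    (Wb : Matrix b b ℂ) (hWb : Wb ∈ Matrix.unitaryGroup b ℂ)
    (ψ : b → ℂ) (ε₁ : ℝ) (hε₁ : 0 ≤ ε₁)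
    (hrec : ∃ WB ∈ Matrix.unitaryGroup B ℂ,
      enorm' ((WB ⊗ₖ (1 : Matrix A A ℂ)).mulVec (L.mulVec ψ) - L.mulVec (Wb.mulVec ψ)) ≤ ε₁) :
    traceNorm (ptraceLeft (outer (L.mulVec (Wb.mulVec ψ))) - ptraceLeft (outer (L.mulVec ψ)))
      ≤ Real.sqrt (2 * (enorm' (L.mulVec ψ) ^ 2 + enorm' (L.mulVec (Wb.mulVec ψ)) ^ 2)) * ε₁ := by
  obtain ⟨WB, hWB, hrec⟩ := hrec
  set u := L.mulVec ψ with hu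
  set v' := L.mulVec (Wb.mulVec ψ) with hv'
  set w' := (WB ⊗ₖ (1 : Matrix A A ℂ)).mulVec u with hw'
  have hptr := ptrace_unitary_inv WB hWB u
  have hD : ∀ x y : A → ℂ, star y ⬝ᵥ ((ptraceLeft (outer v') - ptraceLeft (outer w')) *ᵥ x)
      = star (Pc x v') ⬝ᵥ (Pc y v') - star (Pc x w') ⬝ᵥ (Pc y w') := by
    intro x y
    rw [Matrix.sub_mulVec, dotProduct_sub, pair_ptrace, pair_ptrace]
  have hkey := key2 _ v' w' hD
  have hwu : enorm' w' = enorm' u := by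
    have hsq : enorm' w' ^ 2 = enorm' u ^ 2 := by
      rw [enorm_sq_via_ptrace, enorm_sq_via_ptrace, hptr]
    calc enorm' w' = Real.sqrt (enorm' w' ^ 2) := (Real.sqrt_sq (enorm_nonneg _)).symm
      _ = Real.sqrt (enorm' u ^ 2) := by rw [hsq]
      _ = enorm' u := Real.sqrt_sq (enorm_nonneg _)
  have h1 : enorm' v' + enorm' w'
      ≤ Real.sqrt (2 * (enorm' u ^ 2 + enorm' v' ^ 2)) := by
    rw [hwu]
    exact add_le_sqrt_two_mul (enorm_nonneg _) (enorm_nonneg _)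
  have h2 : enorm' (v' - w') ≤ ε₁ := by
    rw [enorm'_sub_rev]
    exact hrec
  calc traceNorm (ptraceLeft (outer v') - ptraceLeft (outer u))
      = traceNorm (ptraceLeft (outer v') - ptraceLeft (outer w')) := by rw [hptr]
    _ ≤ (enorm' v' + enorm' w') * enorm' (v' - w') := hkey
    _ ≤ Real.sqrt (2 * (enorm' u ^ 2 + enorm' v' ^ 2)) * ε₁ :=
        mul_le_mul h1 h2 (enorm_nonneg _) (Real.sqrt_nonneg _)
end

section
/- Let d ≥ 1, let μ be the Haar probability measure on the unitary group U(d) of d×d complex unitary matrices, and let e ∈ ℂ^d be a fixed unit vector. Then for all indices i, j, k, l ∈ {1,…,d}: ∫_{U(d)} (Ue)_i · conj((Ue)_j) · (Ue)_k · conj((Ue)_l) dμ(U) = (δ_{ij} δ_{kl} + δ_{il} δ_{kj}) / (d(d+1)). Equivalently, the Haar average of (vv†)^{⊗2} over uniformly random unit vectors v ∈ ℂ^d equals (I + F)/(d(d+1)), where F is the swap operator on ℂ^d ⊗ ℂ^d. -/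
open scoped BigOperators
open MeasureTheory

namespace HaarSM

noncomputable section
open Matrix

variable {d : ℕ}

/-- The degree-4 monomial in a vector. -/
def q (v : Fin d → ℂ) (i j k l : Fin d) : ℂ :=
  v i * (starRingEnd ℂ) (v j) * v k * (starRingEnd ℂ) (v l)

/-- The integrand. -/
def f (e : Fin d → ℂ) (i j k l : Fin d) (U : Matrix.unitaryGroup (Fin d) ℂ) : ℂ :=
  q ((U : Matrix (Fin d) (Fin d) ℂ).mulVec e) i j k l

lemma cont_mulVec (e : Fin d → ℂ) (x : Fin d) :
    Continuous fun U : Matrix.unitaryGroup (Fin d) ℂ =>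
      (U : Matrix (Fin d) (Fin d) ℂ).mulVec e x := by
  simp only [Matrix.mulVec, dotProduct]
  exact continuous_finset_sum _ fun j _ =>
    ((Continuous.matrix_elem continuous_subtype_val x j).fun_mul continuous_const)

lemma cont_f (e : Fin d → ℂ) (i j k l : Fin d) : Continuous (f e i j k l) := by
  unfold f q
  exact (((cont_mulVec e i).mul (Complex.continuous_conj.comp (cont_mulVec e j))).mul
    (cont_mulVec e k)).mul (Complex.continuous_conj.comp (cont_mulVec e l))

lemma norm_mulVec_le (e : Fin d → ℂ) (U : Matrix.unitaryGroup (Fin d) ℂ) (x : Fin d) :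
    ‖(U : Matrix (Fin d) (Fin d) ℂ).mulVec e x‖ ≤ ∑ j, ‖e j‖ := by
  rw [Matrix.mulVec, dotProduct]
  refine (norm_sum_le _ _).trans ?_
  refine Finset.sum_le_sum fun j _ => ?_
  rw [norm_mul]
  calc ‖(U : Matrix (Fin d) (Fin d) ℂ) x j‖ * ‖e j‖
      ≤ 1 * ‖e j‖ := by
        gcongr
        exact entry_norm_bound_of_unitary U.2 x j
    _ = ‖e j‖ := one_mul _

lemma integrable_f [MeasurableSpace (Matrix.unitaryGroup (Fin d) ℂ)]
    [BorelSpace (Matrix.unitaryGroup (Fin d) ℂ)]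
    (μ : Measure (Matrix.unitaryGroup (Fin d) ℂ)) [IsProbabilityMeasure μ]
    (e : Fin d → ℂ) (i j k l : Fin d) : Integrable (f e i j k l) μ := by
  refine ⟨(cont_f e i j k l).aestronglyMeasurable,
    HasFiniteIntegral.of_bounded (C := (∑ j, ‖e j‖) ^ 4) (ae_of_all μ fun U => ?_)⟩
  have h0 : (0:ℝ) ≤ ∑ j, ‖e j‖ := Finset.sum_nonneg fun _ _ => norm_nonneg _
  have hb : ∀ x : Fin d, ‖(U : Matrix (Fin d) (Fin d) ℂ).mulVec e x‖ ≤ ∑ j, ‖e j‖ :=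
    norm_mulVec_le e U
  calc ‖f e i j k l U‖
      = ‖(U : Matrix (Fin d) (Fin d) ℂ).mulVec e i‖
        * ‖(U : Matrix (Fin d) (Fin d) ℂ).mulVec e j‖
        * ‖(U : Matrix (Fin d) (Fin d) ℂ).mulVec e k‖
        * ‖(U : Matrix (Fin d) (Fin d) ℂ).mulVec e l‖ := by
        simp [f, q, norm_mul]
    _ ≤ (∑ j, ‖e j‖) * (∑ j, ‖e j‖) * (∑ j, ‖e j‖) * (∑ j, ‖e j‖) := by
        gcongr <;> first | exact norm_nonneg _ | exact hb _
    _ = (∑ j, ‖e j‖) ^ 4 := by ring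

lemma invar [MeasurableSpace (Matrix.unitaryGroup (Fin d) ℂ)]
    [BorelSpace (Matrix.unitaryGroup (Fin d) ℂ)]
    (μ : Measure (Matrix.unitaryGroup (Fin d) ℂ)) [μ.IsHaarMeasure]
    (e : Fin d → ℂ) (i j k l : Fin d) (V : Matrix.unitaryGroup (Fin d) ℂ) :
    ∫ U : Matrix.unitaryGroup (Fin d) ℂ,
        q ((V : Matrix (Fin d) (Fin d) ℂ).mulVec
          ((U : Matrix (Fin d) (Fin d) ℂ).mulVec e)) i j k l ∂μ
      = ∫ U, f e i j k l U ∂μ := by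
  have h := integral_mul_left_eq_self (μ := μ) (f e i j k l) V
  rw [← h]
  refine integral_congr_ae (ae_of_all μ fun U => ?_)
  simp [f, Matrix.mulVec_mulVec]

lemma T_zero [MeasurableSpace (Matrix.unitaryGroup (Fin d) ℂ)]
    [BorelSpace (Matrix.unitaryGroup (Fin d) ℂ)]
    (μ : Measure (Matrix.unitaryGroup (Fin d) ℂ)) [μ.IsHaarMeasure]
    (e : Fin d → ℂ) (i j k l m : Fin d)
    (hc : ((if i = m then 1 else 0) + (if k = m then 1 else 0) : ℤ)
        ≠ (if j = m then 1 else 0) + (if l = m then 1 else 0)) :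
    ∫ U, f e i j k l U ∂μ = 0 := by
  classical
  set c : Fin d → ℂ := fun p => if p = m then Complex.I else 1 with hcdef
  have hstar : ∀ p, (starRingEnd ℂ) (c p) * c p = 1 := by
    intro p
    by_cases hp : p = m <;> simp [hcdef, hp]
  have hmem : Matrix.diagonal c ∈ Matrix.unitaryGroup (Fin d) ℂ := by
    rw [Matrix.mem_unitaryGroup_iff']
    rw [Matrix.star_eq_conjTranspose, Matrix.diagonal_conjTranspose,
      Matrix.diagonal_mul_diagonal]
    convert Matrix.diagonal_one using 2
    funext p
    simpa using hstar p
  have h := invar μ e i j k l ⟨Matrix.diagonal c, hmem⟩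
  have hpt : ∀ U : Matrix.unitaryGroup (Fin d) ℂ,
      q ((Matrix.diagonal c).mulVec ((U : Matrix (Fin d) (Fin d) ℂ).mulVec e)) i j k l
        = (c i * (starRingEnd ℂ) (c j) * c k * (starRingEnd ℂ) (c l)) * f e i j k l U := by
    intro U
    simp only [q, f, Matrix.mulVec_diagonal, _root_.map_mul]
    ring
  rw [integral_congr_ae (ae_of_all μ fun U => hpt U), integral_const_mul] at h
  have hγ : c i * (starRingEnd ℂ) (c j) * c k * (starRingEnd ℂ) (c l) ≠ 1 := by
    by_cases hi : i = m <;> by_cases hj : j = m <;> by_cases hk : k = m <;>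
      by_cases hl : l = m <;>
      simp only [hi, hj, hk, hl, if_true, if_neg, hcdef] at hc ⊢ <;>
      first
        | omega
        | (simp [hi, hj, hk, hl, Complex.ext_iff]; try norm_num)
  have h2 : (c i * (starRingEnd ℂ) (c j) * c k * (starRingEnd ℂ) (c l) - 1)
      * ∫ U, f e i j k l U ∂μ = 0 := by
    rw [sub_mul, one_mul, h, sub_self]
  rcases mul_eq_zero.1 h2 with h3 | h3
  · exact absurd (sub_eq_zero.1 h3) hγ
  · exact h3

lemma norm_one (e : Fin d → ℂ) (he : ∑ i, ‖e i‖ ^ 2 = 1)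
    (U : Matrix.unitaryGroup (Fin d) ℂ) :
    ∑ m, ((U : Matrix (Fin d) (Fin d) ℂ).mulVec e m
      * (starRingEnd ℂ) ((U : Matrix (Fin d) (Fin d) ℂ).mulVec e m)) = 1 := by
  set v : Fin d → ℂ := (U : Matrix (Fin d) (Fin d) ℂ).mulVec e with hv
  have h1 : ∑ m, (v m * (starRingEnd ℂ) (v m)) = dotProduct (star v) v := by
    simp [dotProduct, mul_comm]
  rw [h1, hv, Matrix.star_mulVec, dotProduct_mulVec, Matrix.vecMul_vecMul,
    ← Matrix.star_eq_conjTranspose, Matrix.UnitaryGroup.star_mul_self U, Matrix.vecMul_one]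
  have h2 : ∀ z : ℂ, (starRingEnd ℂ) z * z = ((‖z‖ ^ 2 : ℝ) : ℂ) := by
    intro z
    rw [mul_comm, Complex.mul_conj, Complex.normSq_eq_norm_sq]
  calc dotProduct (star e) e = ∑ m, (starRingEnd ℂ) (e m) * e m := rfl
    _ = ∑ m, ((‖e m‖ ^ 2 : ℝ) : ℂ) := by
        exact Finset.sum_congr rfl fun m _ => h2 (e m)
    _ = ((∑ m, ‖e m‖ ^ 2 : ℝ) : ℂ) := by push_cast; ring
    _ = 1 := by rw [he]; norm_num

lemma sum_T [MeasurableSpace (Matrix.unitaryGroup (Fin d) ℂ)]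
    [BorelSpace (Matrix.unitaryGroup (Fin d) ℂ)]
    (μ : Measure (Matrix.unitaryGroup (Fin d) ℂ)) [IsProbabilityMeasure μ]
    (e : Fin d → ℂ) (he : ∑ i, ‖e i‖ ^ 2 = 1) :
    ∑ m, ∑ k, (∫ U, f e m m k k U ∂μ) = 1 := by
  have hpt : ∀ U : Matrix.unitaryGroup (Fin d) ℂ, (∑ m, ∑ k, f e m m k k U) = 1 := by
    intro U
    set v : Fin d → ℂ := (U : Matrix (Fin d) (Fin d) ℂ).mulVec e with hv
    have hn : ∑ m, (v m * (starRingEnd ℂ) (v m)) = 1 := norm_one e he U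
    calc ∑ m, ∑ k, f e m m k k U
        = ∑ m, ∑ k, (v m * (starRingEnd ℂ) (v m)) * (v k * (starRingEnd ℂ) (v k)) := by
          refine Finset.sum_congr rfl fun m _ => Finset.sum_congr rfl fun k _ => ?_
          simp only [f, q, ← hv]
          ring
      _ = (∑ m, (v m * (starRingEnd ℂ) (v m))) * (∑ k, (v k * (starRingEnd ℂ) (v k))) := by
          rw [Finset.sum_mul_sum]
      _ = 1 := by rw [hn, one_mul]
  calc ∑ m, ∑ k, (∫ U, f e m m k k U ∂μ)
      = ∑ m, ∫ U, ∑ k, f e m m k k U ∂μ :=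
        Finset.sum_congr rfl fun m _ =>
          (integral_finset_sum _ fun k _ => integrable_f μ e m m k k).symm
    _ = ∫ U, ∑ m, ∑ k, f e m m k k U ∂μ :=
        (integral_finset_sum _ fun m _ =>
          integrable_finset_sum _ fun k _ => integrable_f μ e m m k k).symm
    _ = ∫ U : Matrix.unitaryGroup (Fin d) ℂ, (1 : ℂ) ∂μ :=
        integral_congr_ae (ae_of_all μ hpt)
    _ = 1 := by simp

lemma integral_sum4 {G : Type*} [MeasurableSpace G] (μ : Measure G)
    (g : Fin 2 → Fin 2 → Fin 2 → Fin 2 → G → ℂ)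
    (hg : ∀ x y z w, Integrable (g x y z w) μ) :
    ∫ u, ∑ x, ∑ y, ∑ z, ∑ w, g x y z w u ∂μ
      = ∑ x, ∑ y, ∑ z, ∑ w, ∫ u, g x y z w u ∂μ := by
  rw [integral_finset_sum _ fun x _ => integrable_finset_sum _ fun y _ =>
    integrable_finset_sum _ fun z _ => integrable_finset_sum _ fun w _ => hg x y z w]
  refine Finset.sum_congr rfl fun x _ => ?_
  rw [integral_finset_sum _ fun y _ => integrable_finset_sum _ fun z _ =>
    integrable_finset_sum _ fun w _ => hg x y z w]
  refine Finset.sum_congr rfl fun y _ => ?_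
  rw [integral_finset_sum _ fun z _ => integrable_finset_sum _ fun w _ => hg x y z w]
  refine Finset.sum_congr rfl fun z _ => ?_
  exact integral_finset_sum _ fun w _ => hg x y z w

lemma rot [MeasurableSpace (Matrix.unitaryGroup (Fin d) ℂ)]
    [BorelSpace (Matrix.unitaryGroup (Fin d) ℂ)]
    (μ : Measure (Matrix.unitaryGroup (Fin d) ℂ)) [μ.IsHaarMeasure] [IsProbabilityMeasure μ]
    (e : Fin d → ℂ) (a b : Fin d) (hab : a ≠ b) :
    4 * (∫ U, f e a a a a U ∂μ)
      = (∫ U, f e a a a a U ∂μ) + (∫ U, f e b b b b U ∂μ)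
        + 4 * (∫ U, f e a a b b U ∂μ) := by
  classical
  set s : ℂ := (((Real.sqrt 2)⁻¹ : ℝ) : ℂ) with hsdef
  have hs2 : s ^ 2 = 1 / 2 := by
    rw [hsdef, ← Complex.ofReal_pow]
    norm_num [Real.sq_sqrt]
  have hsstar : (starRingEnd ℂ) s = s := Complex.conj_ofReal _
  set E : Fin d → Fin d → Matrix (Fin d) (Fin d) ℂ :=
    fun x y => Matrix.single x y (1 : ℂ) with hEdef
  have hEstar : ∀ x y, (E x y)ᴴ = E y x := by
    intro x y
    ext p r
    simp [hEdef, Matrix.conjTranspose_apply, Matrix.single, and_comm, apply_ite]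
  set P : Matrix (Fin d) (Fin d) ℂ := E a a + E a b + E b a - E b b with hPdef
  set Q : Matrix (Fin d) (Fin d) ℂ := E a a + E b b with hQdef
  have hPP : P * P = (2 : ℂ) • Q := by
    simp only [hPdef, hQdef, hEdef, mul_add, add_mul, mul_sub, sub_mul]
    simp [-Matrix.smul_single, hab, hab.symm]
    all_goals module
  have hPQ : P * Q = P := by
    simp only [hPdef, hQdef, hEdef, mul_add, add_mul, mul_sub, sub_mul]
    simp [-Matrix.smul_single, hab, hab.symm]
    all_goals module
  have hQP : Q * P = P := by
    simp only [hPdef, hQdef, hEdef, mul_add, add_mul, mul_sub, sub_mul]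
    simp [-Matrix.smul_single, hab, hab.symm]
    all_goals module
  have hQQ : Q * Q = Q := by
    simp only [hQdef, hEdef, mul_add, add_mul]
    simp [-Matrix.smul_single, hab, hab.symm]
    all_goals module
  set V : Matrix (Fin d) (Fin d) ℂ := s • P + (1 - Q) with hVdef
  have hVstar : star V = V := by
    rw [Matrix.star_eq_conjTranspose, hVdef, hPdef, hQdef]
    simp only [Matrix.conjTranspose_add, Matrix.conjTranspose_sub, Matrix.conjTranspose_smul,
      Matrix.conjTranspose_one, hEstar, Complex.star_def, hsstar]
    module
  have hss : s * s = 1 / 2 := by rw [← pow_two]; exact hs2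
  have hP1Q : P * (1 - Q) = 0 := by rw [mul_sub, mul_one, hPQ, sub_self]
  have h1QP : (1 - Q) * P = 0 := by rw [sub_mul, one_mul, hQP, sub_self]
  have h1Q1Q : (1 - Q) * (1 - Q) = 1 - Q := by
    rw [sub_mul, one_mul, mul_sub, mul_one, hQQ, sub_self, sub_zero]
  have hV2 : V * V = 1 := by
    have hexp : V * V = (s * s) • (P * P) + s • (P * (1 - Q)) + s • ((1 - Q) * P)
        + (1 - Q) * (1 - Q) := by
      rw [hVdef]
      simp only [add_mul, mul_add, Matrix.smul_mul, Matrix.mul_smul, smul_smul]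
      abel
    rw [hexp, hPP, hP1Q, h1QP, h1Q1Q, smul_smul, hss]
    norm_num
    all_goals abel
  have hVmem : V ∈ Matrix.unitaryGroup (Fin d) ℂ := by
    rw [Matrix.mem_unitaryGroup_iff']
    rw [hVstar, hV2]
  -- mulVec values
  have hmulE : ∀ (x y : Fin d) (v : Fin d → ℂ) (p : Fin d),
      (E x y).mulVec v p = if p = x then v y else 0 := by
    intro x y v p
    rw [hEdef]
    simp only [Matrix.single_mulVec, Function.update]
    by_cases hp : p = x <;> simp [hp]
  have hwa : ∀ v : Fin d → ℂ, V.mulVec v a = s * (v a + v b) := by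
    intro v
    rw [hVdef, Matrix.add_mulVec, Matrix.sub_mulVec, Matrix.smul_mulVec,
      Matrix.one_mulVec, hPdef, hQdef]
    simp only [Matrix.sub_mulVec, Matrix.add_mulVec, Pi.add_apply, Pi.sub_apply,
      Pi.smul_apply, hmulE, if_pos rfl, if_neg hab.symm, smul_eq_mul]
    simp [hab]
    all_goals ring
  have hwb : ∀ v : Fin d → ℂ, V.mulVec v b = s * (v a - v b) := by
    intro v
    rw [hVdef, Matrix.add_mulVec, Matrix.sub_mulVec, Matrix.smul_mulVec,
      Matrix.one_mulVec, hPdef, hQdef]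
    simp only [Matrix.sub_mulVec, Matrix.add_mulVec, Pi.add_apply, Pi.sub_apply,
      Pi.smul_apply, hmulE, if_pos rfl, if_neg hab.symm, smul_eq_mul]
    simp [hab.symm]
    all_goals ring
  set mm : Fin 2 → Fin d := ![a, b] with hm
  have hTi : ∀ x y z w : Fin 2, Integrable (f e (mm x) (mm y) (mm z) (mm w)) μ :=
    fun x y z w => integrable_f μ e _ _ _ _
  have h4 : s ^ 4 = 1 / 4 := by
    rw [show (4:ℕ) = 2 * 2 from rfl, pow_mul, hs2]
    norm_num
  have expand : ∀ U : Matrix.unitaryGroup (Fin d) ℂ,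
      q (V.mulVec ((U : Matrix (Fin d) (Fin d) ℂ).mulVec e)) a a a a
        = (1/4) * ∑ x : Fin 2, ∑ y : Fin 2, ∑ z : Fin 2, ∑ w : Fin 2,
            f e (mm x) (mm y) (mm z) (mm w) U := by
    intro U
    set v : Fin d → ℂ := (U : Matrix (Fin d) (Fin d) ℂ).mulVec e with hv
    simp only [f, q, hwa, ← hv, _root_.map_mul, map_add, hsstar, Fin.sum_univ_two, hm,
      Matrix.cons_val_zero, Matrix.cons_val_one, Matrix.head_cons]
    linear_combination ((v a + v b) * ((starRingEnd ℂ) (v a) + (starRingEnd ℂ) (v b))) ^ 2 * h4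
  have key := invar μ e a a a a ⟨V, hVmem⟩
  rw [integral_congr_ae (ae_of_all μ expand)] at key
  rw [integral_const_mul, integral_sum4 μ _ (fun x y z w => hTi x y z w)] at key
  simp only [Fin.sum_univ_two, hm, Matrix.cons_val_zero, Matrix.cons_val_one,
    Matrix.head_cons] at key
  have z1 : ∫ U, f e a a a b U ∂μ = 0 := T_zero μ e a a a b b (by simp [hab])
  have z2 : ∫ U, f e a a b a U ∂μ = 0 := T_zero μ e a a b a b (by simp [hab])
  have z3 : ∫ U, f e a b a a U ∂μ = 0 := T_zero μ e a b a a b (by simp [hab])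
  have z4 : ∫ U, f e a b a b U ∂μ = 0 := T_zero μ e a b a b b (by simp [hab])
  have z5 : ∫ U, f e a b b b U ∂μ = 0 := T_zero μ e a b b b a (by simp [hab.symm])
  have z6 : ∫ U, f e b a a a U ∂μ = 0 := T_zero μ e b a a a b (by simp [hab])
  have z7 : ∫ U, f e b a b a U ∂μ = 0 := T_zero μ e b a b a b (by simp [hab])
  have z8 : ∫ U, f e b a b b U ∂μ = 0 := T_zero μ e b a b b a (by simp [hab.symm])
  have z9 : ∫ U, f e b b a b U ∂μ = 0 := T_zero μ e b b a b a (by simp [hab.symm])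
  have z10 : ∫ U, f e b b b a U ∂μ = 0 := T_zero μ e b b b a a (by simp [hab.symm])
  have hE1 : ∫ U, f e a b b a U ∂μ = ∫ U, f e a a b b U ∂μ := by
    refine integral_congr_ae (ae_of_all μ fun U => ?_)
    simp only [f, q]
    ring
  have hE2 : ∫ U, f e b a a b U ∂μ = ∫ U, f e a a b b U ∂μ := by
    refine integral_congr_ae (ae_of_all μ fun U => ?_)
    simp only [f, q]
    ring
  have hE3 : ∫ U, f e b b a a U ∂μ = ∫ U, f e a a b b U ∂μ := by
    refine integral_congr_ae (ae_of_all μ fun U => ?_)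
    simp only [f, q]
    ring
  linear_combination (-4:ℂ) * key + z1 + z2 + z3 + z4 + z5 + z6 + z7 + z8 + z9 + z10
    + hE1 + hE2 + hE3

end

end HaarSM

/-- **Second moment of a Haar-random unit vector (the paper's
`\overline{|V_x⟩⟩} = (|I_x⟩⟩ + |S_x⟩⟩)/(d² + d)` identity).**
For the Haar probability measure on `U(d)` and a fixed unit vector `e ∈ ℂ^d`,
`∫ (Ue)_i conj((Ue)_j) (Ue)_k conj((Ue)_l) dμ(U) = (δ_{ij} δ_{kl} + δ_{il} δ_{kj})/(d(d+1))`;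
equivalently, the average of `(vv†)^{⊗2}` over random unit vectors `v` is
`(I + F)/(d(d+1))` with `F` the swap operator. -/
theorem haar_unit_vector_second_moment
    (d : ℕ) (hd : 1 ≤ d)
    [MeasurableSpace (Matrix.unitaryGroup (Fin d) ℂ)]
    [BorelSpace (Matrix.unitaryGroup (Fin d) ℂ)]
    (μ : Measure (Matrix.unitaryGroup (Fin d) ℂ))
    [μ.IsHaarMeasure] [IsProbabilityMeasure μ]
    (e : Fin d → ℂ) (he : ∑ i, ‖e i‖ ^ 2 = 1)
    (i j k l : Fin d) :
    ∫ U : Matrix.unitaryGroup (Fin d) ℂ,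
        ((U : Matrix (Fin d) (Fin d) ℂ).mulVec e i
          * (starRingEnd ℂ) ((U : Matrix (Fin d) (Fin d) ℂ).mulVec e j)
          * (U : Matrix (Fin d) (Fin d) ℂ).mulVec e k
          * (starRingEnd ℂ) ((U : Matrix (Fin d) (Fin d) ℂ).mulVec e l)) ∂μ
      = ((if i = j then 1 else 0) * (if k = l then 1 else 0)
          + (if i = l then 1 else 0) * (if k = j then 1 else 0)) / (d * (d + 1)) := by
  classical
  have hgoal : (∫ U : Matrix.unitaryGroup (Fin d) ℂ,
        ((U : Matrix (Fin d) (Fin d) ℂ).mulVec e i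
          * (starRingEnd ℂ) ((U : Matrix (Fin d) (Fin d) ℂ).mulVec e j)
          * (U : Matrix (Fin d) (Fin d) ℂ).mulVec e k
          * (starRingEnd ℂ) ((U : Matrix (Fin d) (Fin d) ℂ).mulVec e l)) ∂μ)
      = ∫ U, HaarSM.f e i j k l U ∂μ := rfl
  rw [hgoal]
  -- pointwise rearrangement lemma
  have hpair : ∀ a b : Fin d, (∫ U, HaarSM.f e a b b a U ∂μ) = ∫ U, HaarSM.f e a a b b U ∂μ := by
    intro a b
    refine integral_congr_ae (ae_of_all μ fun U => ?_)
    simp only [HaarSM.f, HaarSM.q]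
    ring
  have hswap : ∀ a b : Fin d, (∫ U, HaarSM.f e b b a a U ∂μ) = ∫ U, HaarSM.f e a a b b U ∂μ := by
    intro a b
    refine integral_congr_ae (ae_of_all μ fun U => ?_)
    simp only [HaarSM.f, HaarSM.q]
    ring
  -- all diagonal fourth moments are equal
  have hdiag : ∀ m : Fin d, (∫ U, HaarSM.f e m m m m U ∂μ) = ∫ U, HaarSM.f e i i i i U ∂μ := by
    intro m
    by_cases hmi : m = i
    · rw [hmi]
    · have r1 := HaarSM.rot μ e m i hmi
      have r2 := HaarSM.rot μ e i m (Ne.symm hmi)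
      have hE := hswap i m   -- ∫ f e m m i i = ∫ f e i i m m
      linear_combination (r1 - r2) / 4 + hE
  -- off-diagonal values
  have hoff : ∀ m k' : Fin d, m ≠ k' →
      (∫ U, HaarSM.f e m m k' k' U ∂μ) = (∫ U, HaarSM.f e i i i i U ∂μ) / 2 := by
    intro m k' hmk
    have r1 := HaarSM.rot μ e m k' hmk
    have h1 := hdiag m
    have h2 := hdiag k'
    linear_combination (3 * h1 - h2 - r1) / 4
  -- the normalization
  have hd0 : (d : ℂ) ≠ 0 := Nat.cast_ne_zero.2 (by omega)
  have hd1 : (d : ℂ) + 1 ≠ 0 := by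
    have : ((d + 1 : ℕ) : ℂ) ≠ 0 := Nat.cast_ne_zero.2 (by omega)
    push_cast at this
    exact this
  have hsum := HaarSM.sum_T μ e he
  have hval : (∫ U, HaarSM.f e i i i i U ∂μ) = 2 / ((d : ℂ) * ((d : ℂ) + 1)) := by
    set A : ℂ := ∫ U, HaarSM.f e i i i i U ∂μ with hA
    have hterm : ∀ m k' : Fin d, (∫ U, HaarSM.f e m m k' k' U ∂μ)
        = A / 2 + (if k' = m then A / 2 else 0) := by
      intro m k'
      by_cases hmk : m = k'
      · rw [hmk, hdiag k']
        simp only [if_pos rfl, if_true]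
        ring
      · rw [hoff m k' hmk, if_neg (Ne.symm hmk), add_zero, hA]
    have hsum2 : ∑ m : Fin d, ∑ k' : Fin d, (∫ U, HaarSM.f e m m k' k' U ∂μ)
        = (d : ℂ) * ((d : ℂ) * (A / 2) + A / 2) := by
      rw [Finset.sum_congr rfl fun m _ => Finset.sum_congr rfl fun k' _ => hterm m k']
      have hinner : ∀ m : Fin d, ∑ k' : Fin d, (A / 2 + (if k' = m then A / 2 else 0))
          = (d : ℂ) * (A / 2) + A / 2 := by
        intro m
        rw [Finset.sum_add_distrib, Finset.sum_const, Finset.card_univ, Fintype.card_fin,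
          Finset.sum_ite_eq' Finset.univ m (fun _ => A / 2), if_pos (Finset.mem_univ m),
          nsmul_eq_mul]
      rw [Finset.sum_congr rfl fun m _ => hinner m, Finset.sum_const, Finset.card_univ,
        Fintype.card_fin, nsmul_eq_mul]
    rw [hsum2] at hsum
    field_simp
    linear_combination 2 * hsum
  -- final case analysis
  by_cases h1 : i = j ∧ k = l
  · obtain ⟨rfl, rfl⟩ : i = j ∧ k = l := h1
    by_cases h2 : i = k
    · subst h2
      rw [hval]
      simp only [if_pos rfl, if_true]
      norm_num
    · rw [hoff i k h2, hval]
      simp only [if_pos rfl, if_true, if_neg h2, if_neg (Ne.symm h2)]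
      ring
  · by_cases h2 : i = l ∧ k = j
    · obtain ⟨hil, hkj⟩ := h2
      subst hil
      subst hkj
      have hik : i ≠ k := fun h => h1 ⟨h, h.symm⟩
      rw [hpair i k, hoff i k hik, hval]
      simp only [if_neg hik, if_neg (Ne.symm hik), if_pos rfl, if_true]
      ring
    · -- zero case
      have hij_or : ∫ U, HaarSM.f e i j k l U ∂μ = 0 := by
        by_cases hij : i = j
        · have hkl : k ≠ l := fun h => h1 ⟨hij, h⟩
          refine HaarSM.T_zero μ e i j k l k ?_
          by_cases hik : i = k <;> simp [hik, hij.symm, Ne.symm hkl] <;> omega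
        · by_cases hil : i = l
          · have hkj : k ≠ j := fun h => h2 ⟨hil, h⟩
            refine HaarSM.T_zero μ e i j k l k ?_
            by_cases hik : i = k <;> simp [hik, hil.symm, Ne.symm hkj] <;> omega
          · refine HaarSM.T_zero μ e i j k l i ?_
            by_cases hki : k = i <;>
              simp [hki, fun h : j = i => hij h.symm, fun h : l = i => hil h.symm] <;> omega
      rw [hij_or]
      have : ((if i = j then (1:ℂ) else 0) * (if k = l then 1 else 0)
          + (if i = l then 1 else 0) * (if k = j then 1 else 0)) = 0 := by
        rcases not_and_or.1 h1 with h | h <;> rcases not_and_or.1 h2 with h' | h' <;>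
          simp [h, h']
      rw [this, zero_div]
end

section
/- Let |0̄⟩ and |1̄⟩ be the five-qubit perfect code states, and let a, b ∈ ℂ satisfy |a|² + |b|² = 1, and set ψ = a|0̄⟩ + b|1̄⟩ ∈ ℂ^{2^5}. Then for any two distinct qubit positions i, j ∈ {1,…,5}, the reduced density matrix of ψψ† on qubits {i,j}, obtained by taking the partial trace over the remaining three qubits, equals (1/4)·I₄, the maximally mixed state on ℂ²⊗ℂ². -/
open scoped BigOperators

/-- Computational basis state `|b₁b₂b₃b₄b₅⟩` of the 5-qubit Hilbert space. -/
def ket5 (b : Fin 5 → Fin 2) : (Fin 5 → Fin 2) → ℂ :=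
  fun x => if x = b then 1 else 0

/-- The logical `|0̄⟩` of the five-qubit perfect code. -/
noncomputable def zeroBar : (Fin 5 → Fin 2) → ℂ :=
  (1 / 4 : ℂ) • (ket5 ![0,0,0,0,0]
    + ket5 ![1,0,0,1,0] + ket5 ![0,1,0,0,1] + ket5 ![1,0,1,0,0]
    + ket5 ![0,1,0,1,0] + ket5 ![0,0,1,0,1]
    - ket5 ![1,1,1,1,0] - ket5 ![0,1,1,1,1] - ket5 ![1,0,1,1,1]
    - ket5 ![1,1,0,1,1] - ket5 ![1,1,1,0,1]
    - ket5 ![0,1,1,0,0] - ket5 ![0,0,1,1,0] - ket5 ![0,0,0,1,1]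
    - ket5 ![1,0,0,0,1] - ket5 ![1,1,0,0,0])

/-- The logical `|1̄⟩` of the five-qubit perfect code. -/
noncomputable def oneBar : (Fin 5 → Fin 2) → ℂ :=
  (1 / 4 : ℂ) • (ket5 ![1,1,1,1,1]
    + ket5 ![0,1,1,0,1] + ket5 ![1,0,1,1,0] + ket5 ![0,1,0,1,1]
    + ket5 ![1,0,1,0,1] + ket5 ![1,1,0,1,0]
    - ket5 ![0,0,0,0,1] - ket5 ![1,0,0,0,0] - ket5 ![0,1,0,0,0]
    - ket5 ![0,0,1,0,0] - ket5 ![0,0,0,1,0]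
    - ket5 ![1,0,0,1,1] - ket5 ![1,1,0,0,1] - ket5 ![1,1,1,0,0]
    - ket5 ![0,1,1,1,0] - ket5 ![0,0,1,1,1])

/-- The reduced density matrix of a 5-qubit state `ψ` on the two qubit positions
`i ≠ j`, obtained by the partial trace over the remaining three qubits:
`ρ_{(x₁,x₂),(y₁,y₂)} = ∑ ψ_f conj(ψ_g)` over configurations `f, g` with
`f i = x₁, f j = x₂, g i = y₁, g j = y₂` and `f = g` away from `{i, j}`. -/
noncomputable def redDM (ψ : (Fin 5 → Fin 2) → ℂ) (i j : Fin 5) :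
    Matrix (Fin 2 × Fin 2) (Fin 2 × Fin 2) ℂ :=
  fun x y => ∑ f : Fin 5 → Fin 2, ∑ g : Fin 5 → Fin 2,
    if f i = x.1 ∧ f j = x.2 ∧ g i = y.1 ∧ g j = y.2 ∧
        (∀ m, m ≠ i → m ≠ j → f m = g m)
      then ψ f * (starRingEnd ℂ) (ψ g) else 0

/-! ### Auxiliary integer coefficient functions -/

def kZ (b : Fin 5 → Fin 2) : (Fin 5 → Fin 2) → ℤ :=
  fun x => if x = b then 1 else 0

def zOld0 : (Fin 5 → Fin 2) → ℤ :=
  (kZ ![0,0,0,0,0]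
    + kZ ![1,0,0,1,0] + kZ ![0,1,0,0,1] + kZ ![1,0,1,0,0]
    + kZ ![0,1,0,1,0] + kZ ![0,0,1,0,1]
    - kZ ![1,1,1,1,0] - kZ ![0,1,1,1,1] - kZ ![1,0,1,1,1]
    - kZ ![1,1,0,1,1] - kZ ![1,1,1,0,1]
    - kZ ![0,1,1,0,0] - kZ ![0,0,1,1,0] - kZ ![0,0,0,1,1]
    - kZ ![1,0,0,0,1] - kZ ![1,1,0,0,0])

def zOld1 : (Fin 5 → Fin 2) → ℤ :=
  (kZ ![1,1,1,1,1]
    + kZ ![0,1,1,0,1] + kZ ![1,0,1,1,0] + kZ ![0,1,0,1,1]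
    + kZ ![1,0,1,0,1] + kZ ![1,1,0,1,0]
    - kZ ![0,0,0,0,1] - kZ ![1,0,0,0,0] - kZ ![0,1,0,0,0]
    - kZ ![0,0,1,0,0] - kZ ![0,0,0,1,0]
    - kZ ![1,0,0,1,1] - kZ ![1,1,0,0,1] - kZ ![1,1,1,0,0]
    - kZ ![0,1,1,1,0] - kZ ![0,0,1,1,1])

def tab0 : ℕ → ℤ
  | 0 => 1 | 9 => 1 | 18 => 1 | 5 => 1 | 10 => 1 | 20 => 1
  | 15 => -1 | 30 => -1 | 29 => -1 | 27 => -1 | 23 => -1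
  | 6 => -1 | 12 => -1 | 24 => -1 | 17 => -1 | 3 => -1
  | _ => 0

def tab1 : ℕ → ℤ
  | 31 => 1 | 22 => 1 | 13 => 1 | 26 => 1 | 21 => 1 | 11 => 1
  | 16 => -1 | 1 => -1 | 2 => -1 | 4 => -1 | 8 => -1
  | 25 => -1 | 19 => -1 | 7 => -1 | 14 => -1 | 28 => -1
  | _ => 0

def enc (f : Fin 5 → Fin 2) : ℕ :=
  f 0 + 2*(f 1 : ℕ) + 4*(f 2 : ℕ) + 8*(f 3 : ℕ) + 16*(f 4 : ℕ)

def zc : Fin 2 → (Fin 5 → Fin 2) → ℤ :=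
  ![fun f => tab0 (enc f), fun f => tab1 (enc f)]

lemma zc_zero : ∀ f, zc 0 f = zOld0 f := by decide
lemma zc_one : ∀ f, zc 1 f = zOld1 f := by decide

lemma zeroBar_eq (f : Fin 5 → Fin 2) : zeroBar f = ((zc 0 f : ℤ) : ℂ) / 4 := by
  rw [zc_zero]
  simp only [zeroBar, zOld0, ket5, kZ, Pi.smul_apply, Pi.add_apply, Pi.sub_apply,
    smul_eq_mul]
  push_cast [apply_ite (fun n : ℤ => (n : ℂ))]
  ring

lemma oneBar_eq (f : Fin 5 → Fin 2) : oneBar f = ((zc 1 f : ℤ) : ℂ) / 4 := by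
  rw [zc_one]
  simp only [oneBar, zOld1, ket5, kZ, Pi.smul_apply, Pi.add_apply, Pi.sub_apply,
    smul_eq_mul]
  push_cast [apply_ite (fun n : ℤ => (n : ℂ))]
  ring

set_option maxHeartbeats 4000000 in
/-- The key combinatorial identity, verified by kernel computation. -/
lemma keyS : ∀ (i j : Fin 5), i ≠ j → ∀ (x1 x2 y1 y2 u v : Fin 2),
    (∑ f : Fin 5 → Fin 2,
      if f i = x1 ∧ f j = x2 then
        zc u f * zc v (Function.update (Function.update f i y1) j y2) else 0)
      = if x1 = y1 ∧ x2 = y2 ∧ u = v then 4 else 0 := by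
  decide

/-- Collapsing the inner sum of the partial trace. -/
lemma redDM_apply (ψ : (Fin 5 → Fin 2) → ℂ) {i j : Fin 5} (hij : i ≠ j)
    (x y : Fin 2 × Fin 2) :
    redDM ψ i j x y = ∑ f : Fin 5 → Fin 2,
      if f i = x.1 ∧ f j = x.2 then
        ψ f * (starRingEnd ℂ)
          (ψ (Function.update (Function.update f i y.1) j y.2)) else 0 := by
  unfold redDM
  refine Finset.sum_congr rfl fun f _ => ?_
  set g₀ := Function.update (Function.update f i y.1) j y.2 with hg
  have key : ∀ g : Fin 5 → Fin 2,
      (f i = x.1 ∧ f j = x.2 ∧ g i = y.1 ∧ g j = y.2 ∧ ∀ m, m ≠ i → m ≠ j → f m = g m)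
        ↔ (g = g₀ ∧ (f i = x.1 ∧ f j = x.2)) := by
    intro g
    constructor
    · rintro ⟨h1, h2, h3, h4, h5⟩
      refine ⟨funext fun m => ?_, h1, h2⟩
      by_cases hmj : m = j
      · subst hmj; simp [hg, Function.update_apply, h4]
      · by_cases hmi : m = i
        · subst hmi; simp [hg, Function.update_apply, hmj, h3]
        · simp [hg, Function.update_apply, hmi, hmj, ← h5 m hmi hmj]
    · rintro ⟨rfl, h1, h2⟩
      refine ⟨h1, h2, ?_, ?_, ?_⟩
      · simp [hg, Function.update_apply, hij]
      · simp [hg, Function.update_apply]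
      · intro m hmi hmj; simp [hg, Function.update_apply, hmi, hmj]
  calc (∑ g : Fin 5 → Fin 2,
        if f i = x.1 ∧ f j = x.2 ∧ g i = y.1 ∧ g j = y.2 ∧
            (∀ m, m ≠ i → m ≠ j → f m = g m)
          then ψ f * (starRingEnd ℂ) (ψ g) else 0)
      = ∑ g : Fin 5 → Fin 2,
        if g = g₀ then (if f i = x.1 ∧ f j = x.2
          then ψ f * (starRingEnd ℂ) (ψ g) else 0) else 0 := by
        refine Finset.sum_congr rfl fun g _ => ?_
        rw [if_congr (key g) rfl rfl, ite_and]
    _ = _ := by rw [Finset.sum_ite_eq' Finset.univ g₀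
          (fun g => if f i = x.1 ∧ f j = x.2 then ψ f * (starRingEnd ℂ) (ψ g) else 0)]
                simp

/-- **Any two qubits of a logical state of the `[[5,1,3]]` code are maximally mixed.**
For `ψ = a|0̄⟩ + b|1̄⟩` with `|a|² + |b|² = 1` and any two distinct qubit positions
`i ≠ j`, the reduced density matrix on qubits `{i, j}` equals `(1/4)·I₄`. -/
theorem fiveQubit_two_qubit_marginal_maximally_mixed
    (a b : ℂ) (hab : ‖a‖ ^ 2 + ‖b‖ ^ 2 = 1) (i j : Fin 5) (hij : i ≠ j) :
    redDM (a • zeroBar + b • oneBar) i j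
      = (1 / 4 : ℂ) • (1 : Matrix (Fin 2 × Fin 2) (Fin 2 × Fin 2) ℂ) := by
  have h1 : a * (starRingEnd ℂ) a + b * (starRingEnd ℂ) b = 1 := by
    rw [Complex.mul_conj, Complex.mul_conj, ← Complex.ofReal_add]
    norm_num [Complex.normSq_eq_norm_sq, hab]
  set ψ := a • zeroBar + b • oneBar with hψdef
  have hψ : ∀ f, ψ f = (a * ((zc 0 f : ℤ) : ℂ) + b * ((zc 1 f : ℤ) : ℂ)) / 4 := by
    intro f
    simp [hψdef, Pi.add_apply, Pi.smul_apply, smul_eq_mul, zeroBar_eq, oneBar_eq]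
    ring
  funext x y
  rw [redDM_apply ψ hij x y]
  have hpt : ∀ f : Fin 5 → Fin 2,
      (if f i = x.1 ∧ f j = x.2 then
        ψ f * (starRingEnd ℂ)
          (ψ (Function.update (Function.update f i y.1) j y.2)) else 0)
      = (a * (starRingEnd ℂ) a / 16) *
          (if f i = x.1 ∧ f j = x.2 then
            ((zc 0 f * zc 0 (Function.update (Function.update f i y.1) j y.2) : ℤ) : ℂ) else 0)
        + (a * (starRingEnd ℂ) b / 16) *
          (if f i = x.1 ∧ f j = x.2 then
            ((zc 0 f * zc 1 (Function.update (Function.update f i y.1) j y.2) : ℤ) : ℂ) else 0)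
        + (b * (starRingEnd ℂ) a / 16) *
          (if f i = x.1 ∧ f j = x.2 then
            ((zc 1 f * zc 0 (Function.update (Function.update f i y.1) j y.2) : ℤ) : ℂ) else 0)
        + (b * (starRingEnd ℂ) b / 16) *
          (if f i = x.1 ∧ f j = x.2 then
            ((zc 1 f * zc 1 (Function.update (Function.update f i y.1) j y.2) : ℤ) : ℂ) else 0) := by
    intro f
    by_cases hc : f i = x.1 ∧ f j = x.2
    · rw [if_pos hc, if_pos hc, if_pos hc, if_pos hc, if_pos hc, hψ, hψ]
      push_cast [map_add, map_mul, map_div₀, map_intCast, map_ofNat]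
      ring
    · simp [hc]
  simp only [hpt]
  rw [Finset.sum_add_distrib, Finset.sum_add_distrib, Finset.sum_add_distrib,
    ← Finset.mul_sum, ← Finset.mul_sum, ← Finset.mul_sum, ← Finset.mul_sum]
  have cast_sum : ∀ (u v : Fin 2),
      (∑ f : Fin 5 → Fin 2, if f i = x.1 ∧ f j = x.2 then
        ((zc u f * zc v (Function.update (Function.update f i y.1) j y.2) : ℤ) : ℂ) else 0)
      = (((if x.1 = y.1 ∧ x.2 = y.2 ∧ u = v then (4:ℤ) else 0) : ℤ) : ℂ) := by
    intro u v
    rw [← keyS i j hij x.1 x.2 y.1 y.2 u v]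
    push_cast [apply_ite (fun n : ℤ => (n : ℂ))]
    rfl
  rw [cast_sum 0 0, cast_sum 0 1, cast_sum 1 0, cast_sum 1 1]
  have hx : (x = y) ↔ (x.1 = y.1 ∧ x.2 = y.2) := Prod.ext_iff
  have h01 : ((0 : Fin 2) = 1) = False := by simp
  have h10 : ((1 : Fin 2) = 0) = False := by simp
  by_cases hxy : x.1 = y.1 ∧ x.2 = y.2
  · simp only [hxy.1, hxy.2, true_and, h01, h10, and_false, and_true, if_false,
      if_true, Matrix.smul_apply, Matrix.one_apply, hx.mpr hxy, smul_eq_mul, mul_one]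
    push_cast
    linear_combination (1/4 : ℂ) * h1
  · have hxy' : ¬ x = y := fun h => hxy (hx.mp h)
    rw [if_neg (by tauto), if_neg (by tauto), if_neg (by tauto), if_neg (by tauto)]
    simp [Matrix.one_apply, hxy']
end

section
/- Let |0̄⟩ and |1̄⟩ be the five-qubit perfect code states, let |+y⟩ = (|0⟩ + i|1⟩)/√2, and let ξ = |+y⟩ ⊗ |0⟩ ⊗ |+y⟩ ∈ ℂ^{2³}. Then for every a, b ∈ ℂ there exists a scalar c ∈ ℂ (depending on a and b) such that the partial inner product of a|0̄⟩ + b|1̄⟩ with ξ on the first three qubits equals c · (i|00⟩ − |01⟩ − |10⟩ + i|11⟩). In particular, the post-measurement state of the remaining two qubits is, up to normalization, independent of a and b: this local projective measurement destroys the encoded logical information. -/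
open scoped BigOperators

/-- Partial inner product of a 5-qubit state `ψ` with a 3-qubit state `φ` on the
first three qubits: the 2-qubit vector with components
`∑_{b₁b₂b₃} conj(φ_{b₁b₂b₃}) ψ_{b₁b₂b₃b₄b₅}`. -/
noncomputable def partialInner3 (φ : Fin 2 × Fin 2 × Fin 2 → ℂ)
    (ψ : (Fin 5 → Fin 2) → ℂ) : Fin 2 × Fin 2 → ℂ :=
  fun y => ∑ x : Fin 2 × Fin 2 × Fin 2,
    (starRingEnd ℂ) (φ x) * ψ ![x.1, x.2.1, x.2.2, y.1, y.2]

/-- The single-qubit state `|+y⟩ = (|0⟩ + i|1⟩)/√2`. -/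
noncomputable def plusY : Fin 2 → ℂ :=
  fun t => (if t = 0 then 1 else Complex.I) / (Real.sqrt 2 : ℂ)

/-- The 3-qubit measurement state `ξ = |+y⟩ ⊗ |0⟩ ⊗ |+y⟩`. -/
noncomputable def ξYZY : Fin 2 × Fin 2 × Fin 2 → ℂ :=
  fun x => plusY x.1 * (if x.2.1 = 0 then 1 else 0) * plusY x.2.2

/-- A 2-qubit computational basis state. -/
def ket2 (b : Fin 2 × Fin 2) : Fin 2 × Fin 2 → ℂ :=
  fun y => if y = b then 1 else 0

set_option maxHeartbeats 4000000 in
/-- **Measuring qubits 1–3 of the `[[5,1,3]]` code in the `Y, Z, Y` basis destroys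
the logical information.** For every `a, b` there is a scalar `c` (depending on
`a, b`) such that the projection of `a|0̄⟩ + b|1̄⟩` onto `ξ = |+y⟩⊗|0⟩⊗|+y⟩` on the
first three qubits equals `c·(i|00⟩ − |01⟩ − |10⟩ + i|11⟩)`: the post-measurement
state of the remaining two qubits is, up to normalization, independent of `a, b`. -/
theorem fiveQubit_YZY_measurement_destroys (a b : ℂ) :
    ∃ c : ℂ, partialInner3 ξYZY (a • zeroBar + b • oneBar)
      = c • (Complex.I • ket2 (0, 0) - ket2 (0, 1) - ket2 (1, 0) + Complex.I • ket2 (1, 1)) := by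
  refine ⟨b / 4, ?_⟩
  have h2 : ((Real.sqrt 2 : ℝ) : ℂ) * ((Real.sqrt 2 : ℝ) : ℂ) = 2 := by
    norm_cast
    rw [Real.mul_self_sqrt (by norm_num : (0:ℝ) ≤ 2)]
  funext y
  obtain ⟨y1, y2⟩ := y
  fin_cases y1 <;> fin_cases y2 <;>
    simp (config := { decide := true }) only [partialInner3, ξYZY, plusY, zeroBar, oneBar,
      ket5, ket2, Fintype.sum_prod_type, Fin.sum_univ_two, Pi.add_apply, Pi.sub_apply,
      Pi.smul_apply, smul_eq_mul, map_div₀, Complex.conj_I, map_one, Complex.conj_ofReal,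
      if_true, if_false, Prod.mk.injEq, mul_one, mul_zero, one_mul, zero_mul] <;>
    field_simp <;> ring_nf <;>
    simp only [show ((Real.sqrt 2 : ℝ) : ℂ)^4 = 4 by
        rw [show ((Real.sqrt 2 : ℝ) : ℂ)^4
          = (((Real.sqrt 2:ℝ):ℂ) * ((Real.sqrt 2:ℝ):ℂ)) * (((Real.sqrt 2:ℝ):ℂ) * ((Real.sqrt 2:ℝ):ℂ)) by ring, h2]
        norm_num,
      show ((Real.sqrt 2 : ℝ) : ℂ)^2 = 2 by rw [sq, h2], inv_pow] <;>
    norm_num [map_ofNat] <;> ring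
end

section
/- Let R > 0 and T ∈ (−1/R, 1/R), and define x : (0, 2√2) → ℝ by x(z) = arsinh( (RT/√(2(1−R²T²))) · z/(1 + z²/8) ). Then x is differentiable on (0, 2√2) and for every z ∈ (0, 2√2): x'(z) = RT / ( √2 · (1 + z²/8) · √( (1+z²/8)²/(1−z²/8)² − R²T² ) ). (Note that on this domain (1+z²/8)²/(1−z²/8)² > 1 > R²T², so the square root is well defined and positive.) -/
set_option maxHeartbeats 1000000

private lemma btz_aux (rt a p q A B : ℝ) (ha : a ≠ 0) (hp : p ≠ 0) (hq : q ≠ 0)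
    (hA : A ≠ 0) (hB : B ≠ 0) :
    rt / (a * A * (p / B)) = (a * p / (q * A))⁻¹ * (rt / q * (B / A ^ 2)) := by
  field_simp

/-- **The BTZ end-of-the-world brane trajectory solves the Neumann boundary
condition equation (equations (2.11), (A.8)).** For `R > 0`, `T ∈ (−1/R, 1/R)` and
`x(z) = arsinh((RT/√(2(1−R²T²))) · z/(1+z²/8))`, the function `x` is differentiable
on `(0, 2√2)` and for every `z` in this interval
`x'(z) = RT/(√2 (1+z²/8) √((1+z²/8)²/(1−z²/8)² − R²T²))`. -/
theorem btz_brane_trajectory_derivative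
    (R T : ℝ) (hR : 0 < R) (hT₁ : -(1 / R) < T) (hT₂ : T < 1 / R)
    (x : ℝ → ℝ)
    (hx : ∀ z, x z = Real.arsinh
      (R * T / Real.sqrt (2 * (1 - R ^ 2 * T ^ 2)) * (z / (1 + z ^ 2 / 8)))) :
    DifferentiableOn ℝ x (Set.Ioo 0 (2 * Real.sqrt 2))
    ∧ ∀ z ∈ Set.Ioo (0 : ℝ) (2 * Real.sqrt 2),
        HasDerivAt x
          (R * T / (Real.sqrt 2 * (1 + z ^ 2 / 8) *
            Real.sqrt ((1 + z ^ 2 / 8) ^ 2 / (1 - z ^ 2 / 8) ^ 2 - R ^ 2 * T ^ 2))) z := by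
  have hxf : x = fun z => Real.arsinh
      (R * T / Real.sqrt (2 * (1 - R ^ 2 * T ^ 2)) * (z / (1 + z ^ 2 / 8))) := funext hx
  have hTR1 : T * R < 1 := by
    have := (lt_div_iff₀ hR).mp hT₂; simpa using this
  have hTR2 : -1 < T * R := by
    have h := mul_lt_mul_of_pos_right hT₁ hR
    have h' : -(1 / R) * R = -1 := by field_simp
    linarith
  have hs : R ^ 2 * T ^ 2 < 1 := by nlinarith
  have hs0 : 0 ≤ R ^ 2 * T ^ 2 := by positivity
  have hc2 : (0:ℝ) < 2 * (1 - R ^ 2 * T ^ 2) := by linarith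
  set c : ℝ := R * T / Real.sqrt (2 * (1 - R ^ 2 * T ^ 2)) with hc
  have hmain : ∀ z ∈ Set.Ioo (0 : ℝ) (2 * Real.sqrt 2),
      HasDerivAt x
        (R * T / (Real.sqrt 2 * (1 + z ^ 2 / 8) *
          Real.sqrt ((1 + z ^ 2 / 8) ^ 2 / (1 - z ^ 2 / 8) ^ 2 - R ^ 2 * T ^ 2))) z := by
    rintro z ⟨hz0, hz2⟩
    have hsqrt2 : Real.sqrt 2 ^ 2 = 2 := Real.sq_sqrt (by norm_num)
    have hz8 : z ^ 2 < 8 := by nlinarith [Real.sqrt_nonneg 2]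
    have hA : (0:ℝ) < 1 + z ^ 2 / 8 := by nlinarith
    have hB : (0:ℝ) < 1 - z ^ 2 / 8 := by linarith
    have hN : (0:ℝ) < (1 + z ^ 2 / 8) ^ 2 - R ^ 2 * T ^ 2 * (1 - z ^ 2 / 8) ^ 2 := by
      nlinarith
    -- derivative of inner function
    have h1 : HasDerivAt (fun z : ℝ => 1 + z ^ 2 / 8) (2 * z ^ 1 / 8) z :=
      ((hasDerivAt_pow 2 z).div_const 8).const_add 1
    have h2 : HasDerivAt (fun z : ℝ => z / (1 + z ^ 2 / 8))
        ((1 * (1 + z ^ 2 / 8) - z * (2 * z ^ 1 / 8)) / (1 + z ^ 2 / 8) ^ 2) z :=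
      (hasDerivAt_id z).div h1 (ne_of_gt hA)
    have h3 : HasDerivAt (fun z : ℝ => c * (z / (1 + z ^ 2 / 8)))
        (c * ((1 * (1 + z ^ 2 / 8) - z * (2 * z ^ 1 / 8)) / (1 + z ^ 2 / 8) ^ 2)) z :=
      h2.const_mul c
    have h4 := (Real.hasDerivAt_arsinh (c * (z / (1 + z ^ 2 / 8)))).comp z h3
    rw [hxf]
    refine h4.congr_deriv ?_
    symm
    -- now the algebraic identity
    have hcsq : c ^ 2 = R ^ 2 * T ^ 2 / (2 * (1 - R ^ 2 * T ^ 2)) := by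
      rw [hc, div_pow, Real.sq_sqrt hc2.le]; ring
    have e0 : 1 + (c * (z / (1 + z ^ 2 / 8))) ^ 2 =
        (2 * ((1 + z ^ 2 / 8) ^ 2 - R ^ 2 * T ^ 2 * (1 - z ^ 2 / 8) ^ 2)) /
          (2 * (1 - R ^ 2 * T ^ 2) * (1 + z ^ 2 / 8) ^ 2) := by
      rw [mul_pow, hcsq]; field_simp [(sub_pos.mpr hs).ne']
      ring
    have e1 : Real.sqrt (1 + (c * (z / (1 + z ^ 2 / 8))) ^ 2) =
        Real.sqrt (2 * ((1 + z ^ 2 / 8) ^ 2 - R ^ 2 * T ^ 2 * (1 - z ^ 2 / 8) ^ 2)) /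
          (Real.sqrt (2 * (1 - R ^ 2 * T ^ 2)) * (1 + z ^ 2 / 8)) := by
      rw [e0, Real.sqrt_div (by positivity), Real.sqrt_mul hc2.le, Real.sqrt_sq hA.le]
    have e2 : Real.sqrt ((1 + z ^ 2 / 8) ^ 2 / (1 - z ^ 2 / 8) ^ 2 - R ^ 2 * T ^ 2) =
        Real.sqrt ((1 + z ^ 2 / 8) ^ 2 - R ^ 2 * T ^ 2 * (1 - z ^ 2 / 8) ^ 2) /
          (1 - z ^ 2 / 8) := by
      have e2' : (1 + z ^ 2 / 8) ^ 2 / (1 - z ^ 2 / 8) ^ 2 - R ^ 2 * T ^ 2 =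
          ((1 + z ^ 2 / 8) ^ 2 - R ^ 2 * T ^ 2 * (1 - z ^ 2 / 8) ^ 2) / (1 - z ^ 2 / 8) ^ 2 := by
        rw [sub_div, mul_div_assoc, div_self (by positivity), mul_one]
      rw [e2', Real.sqrt_div hN.le, Real.sqrt_sq hB.le]
    have hsN : (0:ℝ) < Real.sqrt ((1 + z ^ 2 / 8) ^ 2 - R ^ 2 * T ^ 2 * (1 - z ^ 2 / 8) ^ 2) :=
      Real.sqrt_pos.mpr hN
    have hs2 : (0:ℝ) < Real.sqrt 2 := by positivity
    have hsc : (0:ℝ) < Real.sqrt (2 * (1 - R ^ 2 * T ^ 2)) := Real.sqrt_pos.mpr hc2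
    rw [e2, e1, Real.sqrt_mul (by norm_num : (0:ℝ) ≤ 2), hc]
    have hnum : 1 * (1 + z ^ 2 / 8) - z * (2 * z ^ 1 / 8) = 1 - z ^ 2 / 8 := by ring
    rw [hnum]
    exact btz_aux (R * T) _ _ _ _ _ hs2.ne' hsN.ne' hsc.ne' hA.ne' hB.ne'
  exact ⟨fun z hz => ((hmain z hz).differentiableAt).differentiableWithinAt,
    hmain⟩
end

section
/- Let R > 0, h > 0 and T ∈ (−1/R, 1/R), and set z_max = 2√2 h √(1 − R|T|) / (π √(1 + R|T|)). Define x : (0, z_max) → ℝ by x(z) = (h/π) · arctan( π R T z / ( √2 h √( (1 − R²T²)(1 + π²z²/(8h²))² − π²z²/(2h²) ) ) ). Then x is differentiable on (0, z_max) and for every z ∈ (0, z_max): x'(z) = RT / ( √2 · (1 − π²z²/(8h²)) · √( (1 − π²z²/(8h²))²/(1 + π²z²/(8h²))² − R²T² ) ). (On this domain 1 − π²z²/(8h²) > 0 and both square-root arguments are positive.) -/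
set_option maxHeartbeats 1000000 in
/-- **The thermal AdS₃ end-of-the-world brane trajectory solves the Neumann
boundary condition equation (equations (2.12), (A.8)).** For `R, h > 0`,
`T ∈ (−1/R, 1/R)`, `z_max = 2√2 h √(1−R|T|)/(π√(1+R|T|))` and
`x(z) = (h/π) arctan(πRTz/(√2 h √((1−R²T²)(1+π²z²/(8h²))² − π²z²/(2h²))))`,
the function `x` is differentiable on `(0, z_max)` and for every `z` there
`x'(z) = RT/(√2 (1−π²z²/(8h²)) √((1−π²z²/(8h²))²/(1+π²z²/(8h²))² − R²T²))`. -/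
theorem thermal_brane_trajectory_derivative
    (R h T : ℝ) (hR : 0 < R) (hh : 0 < h) (hT₁ : -(1 / R) < T) (hT₂ : T < 1 / R)
    (zmax : ℝ)
    (hzmax : zmax = 2 * Real.sqrt 2 * h * Real.sqrt (1 - R * |T|) /
      (Real.pi * Real.sqrt (1 + R * |T|)))
    (x : ℝ → ℝ)
    (hx : ∀ z, x z = h / Real.pi * Real.arctan
      (Real.pi * R * T * z / (Real.sqrt 2 * h *
        Real.sqrt ((1 - R ^ 2 * T ^ 2) * (1 + Real.pi ^ 2 * z ^ 2 / (8 * h ^ 2)) ^ 2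
          - Real.pi ^ 2 * z ^ 2 / (2 * h ^ 2))))) :
    DifferentiableOn ℝ x (Set.Ioo 0 zmax)
    ∧ ∀ z ∈ Set.Ioo (0 : ℝ) zmax,
        HasDerivAt x
          (R * T / (Real.sqrt 2 * (1 - Real.pi ^ 2 * z ^ 2 / (8 * h ^ 2)) *
            Real.sqrt ((1 - Real.pi ^ 2 * z ^ 2 / (8 * h ^ 2)) ^ 2 /
                (1 + Real.pi ^ 2 * z ^ 2 / (8 * h ^ 2)) ^ 2
              - R ^ 2 * T ^ 2))) z := by
  have hπ : (0:ℝ) < Real.pi := Real.pi_pos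
  have hs2 : (0:ℝ) < Real.sqrt 2 := Real.sqrt_pos.mpr (by norm_num)
  have hk0 : 0 ≤ R * |T| := mul_nonneg hR.le (abs_nonneg T)
  have hk1 : R * |T| < 1 := by
    have hT : |T| < 1 / R := abs_lt.mpr ⟨hT₁, hT₂⟩
    calc R * |T| < R * (1 / R) := (mul_lt_mul_iff_right₀ hR).mpr hT
    _ = 1 := by field_simp
  have hks : R ^ 2 * T ^ 2 = (R * |T|) ^ 2 := by rw [mul_pow, sq_abs]
  have key : ∀ z ∈ Set.Ioo (0 : ℝ) zmax,
      HasDerivAt x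
        (R * T / (Real.sqrt 2 * (1 - Real.pi ^ 2 * z ^ 2 / (8 * h ^ 2)) *
          Real.sqrt ((1 - Real.pi ^ 2 * z ^ 2 / (8 * h ^ 2)) ^ 2 /
              (1 + Real.pi ^ 2 * z ^ 2 / (8 * h ^ 2)) ^ 2
            - R ^ 2 * T ^ 2))) z := by
    intro z hz
    obtain ⟨hz0, hzm⟩ := hz
    have hzm2 : z ^ 2 < zmax ^ 2 := by
      have hzmp : 0 < zmax := lt_trans hz0 hzm
      exact pow_lt_pow_left₀ hzm hz0.le (by norm_num)
    have hsq1 : Real.sqrt (1 - R * |T|) ^ 2 = 1 - R * |T| :=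
      Real.sq_sqrt (by linarith)
    have hsq2 : Real.sqrt (1 + R * |T|) ^ 2 = 1 + R * |T| :=
      Real.sq_sqrt (by linarith)
    have hzmaxsq : zmax ^ 2 = 8 * h ^ 2 * (1 - R * |T|) / (Real.pi ^ 2 * (1 + R * |T|)) := by
      rw [hzmax, div_pow, mul_pow, mul_pow, mul_pow, mul_pow, hsq1, hsq2,
        Real.sq_sqrt (by norm_num : (0:ℝ) ≤ 2)]
      ring
    have hz2 : Real.pi ^ 2 * z ^ 2 * (1 + R * |T|) < 8 * h ^ 2 * (1 - R * |T|) := by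
      rw [hzmaxsq] at hzm2
      have hden : 0 < Real.pi ^ 2 * (1 + R * |T|) := by positivity
      rw [lt_div_iff₀ hden] at hzm2
      calc Real.pi ^ 2 * z ^ 2 * (1 + R * |T|) = z ^ 2 * (Real.pi ^ 2 * (1 + R * |T|)) := by ring
      _ < 8 * h ^ 2 * (1 - R * |T|) := hzm2
    set q : ℝ := Real.pi ^ 2 * z ^ 2 / (8 * h ^ 2) with hq
    have hq0 : 0 < q := by positivity
    have hqM : q * (1 + R * |T|) < 1 - R * |T| := by
      rw [hq, div_mul_eq_mul_div, div_lt_iff₀ (by positivity : (0:ℝ) < 8 * h ^ 2)]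
      calc Real.pi ^ 2 * z ^ 2 * (1 + R * |T|) < 8 * h ^ 2 * (1 - R * |T|) := hz2
      _ = (1 - R * |T|) * (8 * h ^ 2) := by ring
    have hM : 0 < 1 - q := by nlinarith [mul_nonneg hq0.le hk0]
    have hP : 0 < 1 + q := by linarith
    set u : ℝ := (1 - R ^ 2 * T ^ 2) * (1 + q) ^ 2 - Real.pi ^ 2 * z ^ 2 / (2 * h ^ 2) with hu
    have huM : u = (1 - q) ^ 2 - R ^ 2 * T ^ 2 * (1 + q) ^ 2 := by
      rw [hu, hq]; field_simp; ring
    have hupos : 0 < u := by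
      rw [huM, hks]
      have h1 : 0 < (1 - q) - R * |T| * (1 + q) := by nlinarith
      have h2 : 0 < (1 - q) + R * |T| * (1 + q) := by positivity
      nlinarith [mul_pos h1 h2]
    set W : ℝ := Real.sqrt u with hW
    have hWpos : 0 < W := Real.sqrt_pos.mpr hupos
    have hW2 : W ^ 2 = u := Real.sq_sqrt hupos.le
    have huz : (1 - R ^ 2 * T ^ 2) * (1 + Real.pi ^ 2 * z ^ 2 / (8 * h ^ 2)) ^ 2
        - Real.pi ^ 2 * z ^ 2 / (2 * h ^ 2) = u := by rw [hu, hq]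
    -- derivative of the radicand
    have hqd : HasDerivAt (fun y : ℝ => Real.pi ^ 2 * y ^ 2 / (8 * h ^ 2))
        (Real.pi ^ 2 * (2 * z) / (8 * h ^ 2)) z := by
      have := ((hasDerivAt_pow 2 z).const_mul (Real.pi ^ 2)).div_const (8 * h ^ 2)
      simpa using this
    set u' : ℝ := (1 - R ^ 2 * T ^ 2) *
        (2 * (1 + q) * (Real.pi ^ 2 * (2 * z) / (8 * h ^ 2)))
      - Real.pi ^ 2 * (2 * z) / (2 * h ^ 2) with hu'
    have hud : HasDerivAt (fun y : ℝ =>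
        (1 - R ^ 2 * T ^ 2) * (1 + Real.pi ^ 2 * y ^ 2 / (8 * h ^ 2)) ^ 2
          - Real.pi ^ 2 * y ^ 2 / (2 * h ^ 2)) u' z := by
      have h1 : HasDerivAt (fun y : ℝ => (1 + Real.pi ^ 2 * y ^ 2 / (8 * h ^ 2)) ^ 2)
          (2 * (1 + q) * (Real.pi ^ 2 * (2 * z) / (8 * h ^ 2))) z := by
        have := (hqd.const_add 1).pow 2
        simpa [hq, mul_comm, mul_assoc, Pi.pow_def] using this
      have h2 : HasDerivAt (fun y : ℝ => Real.pi ^ 2 * y ^ 2 / (2 * h ^ 2))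
          (Real.pi ^ 2 * (2 * z) / (2 * h ^ 2)) z := by
        have := ((hasDerivAt_pow 2 z).const_mul (Real.pi ^ 2)).div_const (2 * h ^ 2)
        simpa using this
      exact (h1.const_mul _).sub h2
    have hsd : HasDerivAt (fun y : ℝ =>
        Real.sqrt 2 * h * Real.sqrt ((1 - R ^ 2 * T ^ 2) *
          (1 + Real.pi ^ 2 * y ^ 2 / (8 * h ^ 2)) ^ 2 - Real.pi ^ 2 * y ^ 2 / (2 * h ^ 2)))
        (Real.sqrt 2 * h * (u' / (2 * W))) z := by
      have := (hud.sqrt (by rw [huz]; exact hupos.ne')).const_mul (Real.sqrt 2 * h)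
      rw [huz] at this
      exact this
    have hDne : Real.sqrt 2 * h * W ≠ 0 := by positivity
    have hnd : HasDerivAt (fun y : ℝ => Real.pi * R * T * y) (Real.pi * R * T) z := by
      simpa using (hasDerivAt_id z).const_mul (Real.pi * R * T)
    have hFd : HasDerivAt (fun y : ℝ =>
        Real.pi * R * T * y / (Real.sqrt 2 * h *
          Real.sqrt ((1 - R ^ 2 * T ^ 2) * (1 + Real.pi ^ 2 * y ^ 2 / (8 * h ^ 2)) ^ 2
            - Real.pi ^ 2 * y ^ 2 / (2 * h ^ 2))))
        ((Real.pi * R * T * (Real.sqrt 2 * h * W)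
          - Real.pi * R * T * z * (Real.sqrt 2 * h * (u' / (2 * W))))
          / (Real.sqrt 2 * h * W) ^ 2) z := by
      have := hnd.div hsd (by rw [huz]; exact hDne)
      rw [huz] at this
      exact this
    have hxd : HasDerivAt x
        ((h / Real.pi) * (1 / (1 + (Real.pi * R * T * z / (Real.sqrt 2 * h * W)) ^ 2) *
          ((Real.pi * R * T * (Real.sqrt 2 * h * W)
            - Real.pi * R * T * z * (Real.sqrt 2 * h * (u' / (2 * W))))
            / (Real.sqrt 2 * h * W) ^ 2))) z := by
      have hcomp := ((Real.hasDerivAt_arctan _).comp z hFd).const_mul (h / Real.pi)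
      have hfun : x = fun y => h / Real.pi * Real.arctan
          (Real.pi * R * T * y / (Real.sqrt 2 * h *
            Real.sqrt ((1 - R ^ 2 * T ^ 2) * (1 + Real.pi ^ 2 * y ^ 2 / (8 * h ^ 2)) ^ 2
              - Real.pi ^ 2 * y ^ 2 / (2 * h ^ 2)))) := funext hx
      rw [hfun]
      rw [huz] at hcomp
      exact hcomp
    -- value identities
    have hs1 : R ^ 2 * T ^ 2 < 1 := by rw [hks]; nlinarith
    have hsne : (1:ℝ) - R ^ 2 * T ^ 2 ≠ 0 := by linarith
    have hsq2' : (Real.sqrt 2) ^ 2 = 2 := Real.sq_sqrt (by norm_num)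
    -- step C : 1 + F² = (1-s)(1-q)²/W²
    have hz2q : z ^ 2 = 8 * h ^ 2 * q / Real.pi ^ 2 := by
      rw [hq]; field_simp
    have hune : (1 - q) ^ 2 - R ^ 2 * T ^ 2 * (1 + q) ^ 2 ≠ 0 := by
      rw [← huM]; exact hupos.ne'
    have stepC : 1 + (Real.pi * R * T * z / (Real.sqrt 2 * h * W)) ^ 2
        = (1 - R ^ 2 * T ^ 2) * (1 - q) ^ 2 / W ^ 2 := by
      have e : (Real.sqrt 2 * h * W) ^ 2 = 2 * (h ^ 2 * W ^ 2) := by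
        rw [mul_pow, mul_pow, hsq2']; ring
      rw [div_pow, e, hW2, huM, mul_pow, hz2q]
      field_simp [hune]
      ring
    -- step B : u - z u'/2 = (1-s)(1+q)(1-q)
    have stepB : u - z * u' / 2 = (1 - R ^ 2 * T ^ 2) * (1 + q) * (1 - q) := by
      rw [hu', hu, hq]
      field_simp
      ring
    -- step A : numerator = √2 h π R T ((1-s)(1+q)(1-q)) / W
    have stepA : Real.pi * R * T * (Real.sqrt 2 * h * W)
          - Real.pi * R * T * z * (Real.sqrt 2 * h * (u' / (2 * W)))
        = Real.sqrt 2 * h * (Real.pi * R * T) *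
            ((1 - R ^ 2 * T ^ 2) * (1 + q) * (1 - q)) / W := by
      rw [← stepB, ← hW2]
      field_simp
    have hsqrt_eq : Real.sqrt ((1 - q) ^ 2 / (1 + q) ^ 2 - R ^ 2 * T ^ 2) = W / (1 + q) := by
      have harg : (1 - q) ^ 2 / (1 + q) ^ 2 - R ^ 2 * T ^ 2 = u / (1 + q) ^ 2 := by
        rw [huM]; field_simp
      rw [harg, Real.sqrt_div hupos.le, Real.sqrt_sq hP.le, hW]
    have hval : (h / Real.pi) * (1 / (1 + (Real.pi * R * T * z / (Real.sqrt 2 * h * W)) ^ 2) *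
          ((Real.pi * R * T * (Real.sqrt 2 * h * W)
            - Real.pi * R * T * z * (Real.sqrt 2 * h * (u' / (2 * W))))
            / (Real.sqrt 2 * h * W) ^ 2))
        = R * T / (Real.sqrt 2 * (1 - q) * (W / (1 + q))) := by
      rw [stepC, stepA]
      have e : (Real.sqrt 2 * h * W) ^ 2 = 2 * (h ^ 2 * W ^ 2) := by
        rw [mul_pow, mul_pow, hsq2']; ring
      rw [e]
      field_simp
      ring_nf
      rw [hsq2']
    rw [hsqrt_eq, ← hval]
    exact hxd
  exact ⟨fun z hz => (key z hz).differentiableAt.differentiableWithinAt, key⟩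
end

section
/- Let R > 0, h > 0 and T ∈ (−1/R, 1/R), and define P(z) = (1 − R²T²)(1 + π²z²/(8h²))² − π²z²/(2h²) and z_max = 2√2 h √(1 − R|T|) / (π √(1 + R|T|)). Then: (i) P(z_max) = 0; (ii) P(z) > 0 for all z ∈ [0, z_max); and (iii) z_max ≤ 2√2 h/π, with equality if and only if T = 0. -/
/-- **The turning point of the connected brane in thermal AdS₃.** With
`P(z) = (1−R²T²)(1+π²z²/(8h²))² − π²z²/(2h²)` and
`z_max = 2√2 h √(1−R|T|)/(π√(1+R|T|))`: (i) `P(z_max) = 0`;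
(ii) `P(z) > 0` for all `z ∈ [0, z_max)`; (iii) `z_max ≤ 2√2 h/π`, with
equality if and only if `T = 0`. -/
theorem thermal_brane_turning_point
    (R h T : ℝ) (hR : 0 < R) (hh : 0 < h) (hT₁ : -(1 / R) < T) (hT₂ : T < 1 / R)
    (P : ℝ → ℝ)
    (hP : ∀ z, P z = (1 - R ^ 2 * T ^ 2) * (1 + Real.pi ^ 2 * z ^ 2 / (8 * h ^ 2)) ^ 2
      - Real.pi ^ 2 * z ^ 2 / (2 * h ^ 2))
    (zmax : ℝ)
    (hzmax : zmax = 2 * Real.sqrt 2 * h * Real.sqrt (1 - R * |T|) /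
      (Real.pi * Real.sqrt (1 + R * |T|))) :
    P zmax = 0
    ∧ (∀ z ∈ Set.Ico (0 : ℝ) zmax, 0 < P z)
    ∧ zmax ≤ 2 * Real.sqrt 2 * h / Real.pi
    ∧ (zmax = 2 * Real.sqrt 2 * h / Real.pi ↔ T = 0) := by
  have hπ : 0 < Real.pi := Real.pi_pos
  have hπne : Real.pi ≠ 0 := ne_of_gt hπ
  have hhne : h ≠ 0 := ne_of_gt hh
  set a := R * |T| with ha
  have ha0 : 0 ≤ a := mul_nonneg hR.le (abs_nonneg T)
  have ha1 : a < 1 := by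
    have hTabs : |T| < 1 / R := abs_lt.mpr ⟨hT₁, hT₂⟩
    have := mul_lt_mul_of_pos_left hTabs hR
    calc a = R * |T| := rfl
      _ < R * (1 / R) := this
      _ = 1 := by field_simp
  have haT : R ^ 2 * T ^ 2 = a ^ 2 := by
    rw [ha, mul_pow, sq_abs]
  have h1a : (0:ℝ) < 1 + a := by linarith
  have h1a' : (0:ℝ) ≤ 1 - a := by linarith
  have h1ane : (1:ℝ) + a ≠ 0 := ne_of_gt h1a
  have hs2 : Real.sqrt 2 ^ 2 = 2 := Real.sq_sqrt (by norm_num)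
  have hsp : Real.sqrt (1 + a) ^ 2 = 1 + a := Real.sq_sqrt h1a.le
  have hsm : Real.sqrt (1 - a) ^ 2 = 1 - a := Real.sq_sqrt h1a'
  have hspos : 0 < Real.sqrt (1 + a) := Real.sqrt_pos.mpr h1a
  have hz2 : zmax ^ 2 = 8 * h ^ 2 * (1 - a) / (Real.pi ^ 2 * (1 + a)) := by
    rw [hzmax, div_pow]
    simp only [mul_pow]
    rw [hs2, hsm, hsp]
    ring
  -- Part (i)
  have hPz : P zmax = 0 := by
    rw [hP zmax, haT, hz2]
    field_simp
    ring
  refine ⟨hPz, ?_, ?_, ?_⟩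
  · -- Part (ii)
    have key : ∀ u : ℝ, 0 ≤ u → u * (1 + a) < 1 - a →
        0 < (1 - a ^ 2) * (1 + u) ^ 2 - 4 * u := by
      intro u hu0 huu'
      have hua : 0 ≤ u * a := mul_nonneg hu0 ha0
      have h1pos : 0 < 1 - a - u * (1 + a) := by linarith
      have h2pos : 0 < 1 + a - u * (1 - a) := by nlinarith
      nlinarith [mul_pos h1pos h2pos]
    rintro z ⟨hz0, hzlt⟩
    have hzmpos : 0 < zmax := lt_of_le_of_lt hz0 hzlt
    have hzz : z ^ 2 < zmax ^ 2 := by nlinarith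
    have huu' : (Real.pi ^ 2 * z ^ 2 / (8 * h ^ 2)) * (1 + a) < 1 - a := by
      rw [← lt_div_iff₀ h1a]
      have heq : Real.pi ^ 2 * zmax ^ 2 / (8 * h ^ 2) = (1 - a) / (1 + a) := by
        rw [hz2]; field_simp
      calc Real.pi ^ 2 * z ^ 2 / (8 * h ^ 2)
          < Real.pi ^ 2 * zmax ^ 2 / (8 * h ^ 2) := by gcongr
        _ = (1 - a) / (1 + a) := heq
    have hPzu : P z = (1 - a ^ 2) * (1 + Real.pi ^ 2 * z ^ 2 / (8 * h ^ 2)) ^ 2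
        - 4 * (Real.pi ^ 2 * z ^ 2 / (8 * h ^ 2)) := by
      rw [hP z, haT]
      have h2 : Real.pi ^ 2 * z ^ 2 / (2 * h ^ 2)
          = 4 * (Real.pi ^ 2 * z ^ 2 / (8 * h ^ 2)) := by
        field_simp; ring
      rw [h2]
    rw [hPzu]
    exact key _ (by positivity) huu'
  · -- Part (iii)
    have hle : Real.sqrt (1 - a) ≤ Real.sqrt (1 + a) := Real.sqrt_le_sqrt (by linarith)
    have hq : Real.sqrt (1 - a) / Real.sqrt (1 + a) ≤ 1 :=
      div_le_one_of_le₀ hle (Real.sqrt_nonneg _)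
    have hform : zmax = (2 * Real.sqrt 2 * h / Real.pi)
        * (Real.sqrt (1 - a) / Real.sqrt (1 + a)) := by
      rw [hzmax]; field_simp
    rw [hform]
    have hC : (0:ℝ) ≤ 2 * Real.sqrt 2 * h / Real.pi := by positivity
    calc (2 * Real.sqrt 2 * h / Real.pi) * (Real.sqrt (1 - a) / Real.sqrt (1 + a))
        ≤ (2 * Real.sqrt 2 * h / Real.pi) * 1 := by
          exact mul_le_mul_of_nonneg_left hq hC
      _ = 2 * Real.sqrt 2 * h / Real.pi := mul_one _
  · -- equality iff T = 0
    constructor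
    · intro heq
      have hform : zmax = (2 * Real.sqrt 2 * h / Real.pi)
          * (Real.sqrt (1 - a) / Real.sqrt (1 + a)) := by
        rw [hzmax]; field_simp
      have hCpos : (0:ℝ) < 2 * Real.sqrt 2 * h / Real.pi := by positivity
      have hmul : (2 * Real.sqrt 2 * h / Real.pi)
          * (Real.sqrt (1 - a) / Real.sqrt (1 + a))
          = (2 * Real.sqrt 2 * h / Real.pi) * 1 := by
        rw [← hform, heq, mul_one]
      have hq1 : Real.sqrt (1 - a) / Real.sqrt (1 + a) = 1 :=
        mul_left_cancel₀ (ne_of_gt hCpos) hmul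
      have hseq : Real.sqrt (1 - a) = Real.sqrt (1 + a) :=
        (div_eq_one_iff_eq (ne_of_gt hspos)).mp hq1
      have ha0' : a = 0 := by
        have : 1 - a = 1 + a := by rw [← hsm, ← hsp, hseq]
        linarith
      have : |T| = 0 := by
        rcases mul_eq_zero.mp ha0' with h' | h'
        · exact absurd h' (ne_of_gt hR)
        · exact h'
      exact abs_eq_zero.mp this
    · intro hT0
      rw [hzmax, ha, hT0]
      simp
end

section
/- Let R > 0, h > 0 and T ∈ (−1/R, 1/R), and define the two BTZ brane trajectories x⁺(z) = arsinh( (RT/√(2(1−R²T²))) z/(1+z²/8) ) and x⁻(z) = −arsinh( (RT/√(2(1−R²T²))) z/(1+z²/8) ) − h on [0, 2√2]. Then x⁺(z) − x⁻(z) > 0 for all z ∈ [0, 2√2] if and only if RT > −tanh(h/2). In particular, with T_* = −tanh(h/2)/R, the two end-of-the-world branes in the Euclidean BTZ geometry do not intersect precisely when T > T_*. -/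
/-- `a ↦ a/√(1-a²)` is strictly increasing on `(-1,1)`. -/
lemma g_strict_mono {a b : ℝ} (ha : -1 < a) (hab : a < b) (hb : b < 1) :
    a / Real.sqrt (1 - a ^ 2) < b / Real.sqrt (1 - b ^ 2) := by
  have hda : 0 < 1 - a ^ 2 := by nlinarith
  have hdb : 0 < 1 - b ^ 2 := by nlinarith
  set sa := Real.sqrt (1 - a ^ 2) with hsa_def
  set sb := Real.sqrt (1 - b ^ 2) with hsb_def
  have hsa : 0 < sa := Real.sqrt_pos.mpr hda
  have hsb : 0 < sb := Real.sqrt_pos.mpr hdb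
  have hsa2 : sa ^ 2 = 1 - a ^ 2 := Real.sq_sqrt hda.le
  have hsb2 : sb ^ 2 = 1 - b ^ 2 := Real.sq_sqrt hdb.le
  rw [div_lt_div_iff₀ hsa hsb]
  rcases le_or_gt 0 a with h0a | h0a
  · -- 0 ≤ a < b, square
    have hb0 : 0 < b := lt_of_le_of_lt h0a hab
    have : (a * sb) ^ 2 < (b * sa) ^ 2 := by nlinarith
    exact lt_of_pow_lt_pow_left₀ 2 (by positivity) this
  · rcases le_or_gt 0 b with h0b | h0b
    · -- a < 0 ≤ b
      have : a * sb < 0 := mul_neg_of_neg_of_pos h0a hsb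
      have h2 : 0 ≤ b * sa := mul_nonneg h0b hsa.le
      linarith
    · -- a < b < 0
      have key : (-(b * sa)) ^ 2 < (-(a * sb)) ^ 2 := by nlinarith
      have : -(b * sa) < -(a * sb) :=
        lt_of_pow_lt_pow_left₀ 2 (by nlinarith [mul_pos hsb (neg_pos.mpr h0a)]) key
      linarith

/-- the `≤` version. -/
lemma g_mono_le {a b : ℝ} (ha : -1 < a) (hab : a ≤ b) (hb : b < 1) :
    a / Real.sqrt (1 - a ^ 2) ≤ b / Real.sqrt (1 - b ^ 2) := by
  rcases eq_or_lt_of_le hab with rfl | h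
  · exact le_refl _
  · exact (g_strict_mono ha h hb).le

/-- **Non-intersection of the two BTZ end-of-the-world branes (Section 2.3.2).**
With `x⁺(z) = arsinh((RT/√(2(1−R²T²))) z/(1+z²/8))` and `x⁻(z) = −x⁺(z) − h` on
`[0, 2√2]`, the branes do not intersect, i.e. `x⁺(z) − x⁻(z) > 0` for all
`z ∈ [0, 2√2]`, if and only if `RT > −tanh(h/2)`; equivalently, with
`T_* = −tanh(h/2)/R`, precisely when `T > T_*`. -/
theorem btz_branes_no_intersection_iff
    (R h T : ℝ) (hR : 0 < R) (hh : 0 < h) (hT₁ : -(1 / R) < T) (hT₂ : T < 1 / R)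
    (xp xm : ℝ → ℝ)
    (hxp : ∀ z, xp z = Real.arsinh
      (R * T / Real.sqrt (2 * (1 - R ^ 2 * T ^ 2)) * (z / (1 + z ^ 2 / 8))))
    (hxm : ∀ z, xm z = -Real.arsinh
      (R * T / Real.sqrt (2 * (1 - R ^ 2 * T ^ 2)) * (z / (1 + z ^ 2 / 8))) - h) :
    ((∀ z ∈ Set.Icc (0 : ℝ) (2 * Real.sqrt 2), 0 < xp z - xm z)
        ↔ -Real.tanh (h / 2) < R * T)
    ∧ ((∀ z ∈ Set.Icc (0 : ℝ) (2 * Real.sqrt 2), 0 < xp z - xm z)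
        ↔ -Real.tanh (h / 2) / R < T) := by
  set u : ℝ := R * T with hu_def
  -- bounds on u
  have hu1 : -1 < u := by
    have h1 := (mul_lt_mul_iff_right₀ hR).mpr hT₁
    have : R * -(1 / R) = -1 := by field_simp
    rw [this] at h1; exact h1
  have hu2 : u < 1 := by
    have h1 := (mul_lt_mul_iff_right₀ hR).mpr hT₂
    have : R * (1 / R) = 1 := by field_simp
    rw [this] at h1; exact h1
  have hD : 0 < 1 - u ^ 2 := by nlinarith
  set sD := Real.sqrt (1 - u ^ 2) with hsD_def
  have hsD : 0 < sD := Real.sqrt_pos.mpr hD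
  have hsD2 : sD ^ 2 = 1 - u ^ 2 := Real.sq_sqrt hD.le
  have hs2 : (0:ℝ) < Real.sqrt 2 := Real.sqrt_pos.mpr (by norm_num)
  have hs2sq : Real.sqrt 2 ^ 2 = 2 := Real.sq_sqrt (by norm_num)
  have hRT2 : R ^ 2 * T ^ 2 = u ^ 2 := by rw [hu_def]; ring
  have hsqrt_eq : Real.sqrt (2 * (1 - R ^ 2 * T ^ 2)) = Real.sqrt 2 * sD := by
    rw [hRT2, hsD_def, ← Real.sqrt_mul (by norm_num : (0:ℝ) ≤ 2)]
  -- tanh facts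
  set t := Real.tanh (h / 2) with ht_def
  have hch : 0 < Real.cosh (h / 2) := Real.cosh_pos _
  have hcs := Real.cosh_sq_sub_sinh_sq (h / 2)
  have hsh_pos : 0 < Real.sinh (h / 2) := by
    rw [← Real.sinh_zero]; exact Real.sinh_lt_sinh.mpr (by linarith)
  have ht1 : t < 1 := by
    rw [ht_def, Real.tanh_eq_sinh_div_cosh, div_lt_one hch]; nlinarith
  have ht0 : 0 < t := by
    rw [ht_def, Real.tanh_eq_sinh_div_cosh]; positivity
  have ht2 : 1 - t ^ 2 = 1 / Real.cosh (h / 2) ^ 2 := by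
    rw [ht_def, Real.tanh_eq_sinh_div_cosh, div_pow]
    field_simp
    exact hcs
  have hsqrt_t : Real.sqrt (1 - t ^ 2) = 1 / Real.cosh (h / 2) := by
    rw [ht2, one_div, one_div, Real.sqrt_inv, Real.sqrt_sq hch.le]
  have hgt : t / Real.sqrt (1 - t ^ 2) = Real.sinh (h / 2) := by
    rw [hsqrt_t, ht_def, Real.tanh_eq_sinh_div_cosh]
    field_simp
  -- the key ratio
  have hmain : (∀ z ∈ Set.Icc (0 : ℝ) (2 * Real.sqrt 2), 0 < xp z - xm z) ↔ -t < u := by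
    constructor
    · intro hP
      have hz0 : (2 * Real.sqrt 2) ∈ Set.Icc (0 : ℝ) (2 * Real.sqrt 2) :=
        ⟨by positivity, le_refl _⟩
      have := hP _ hz0
      rw [hxp, hxm, hsqrt_eq] at this
      have hval : (2 * Real.sqrt 2) / (1 + (2 * Real.sqrt 2) ^ 2 / 8) = Real.sqrt 2 := by
        have : (2 * Real.sqrt 2) ^ 2 = 8 := by rw [mul_pow, hs2sq]; norm_num
        rw [this]; norm_num
      rw [hval] at this
      have hE : u / (Real.sqrt 2 * sD) * Real.sqrt 2 = u / sD := by
        field_simp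
      rw [hE] at this
      -- this : 0 < arsinh (u/sD) - (-arsinh (u/sD) - h)
      have harc : -(h / 2) < Real.arsinh (u / sD) := by linarith
      have hkey : -Real.sinh (h / 2) < u / sD := by
        rw [show -(h/2) = Real.arsinh (Real.sinh (-(h/2))) from (Real.arsinh_sinh _).symm] at harc
        have := Real.arsinh_lt_arsinh.mp harc
        rwa [Real.sinh_neg] at this
      -- now conclude -t < u
      by_contra hcon
      push_neg at hcon
      have hg := g_mono_le (by linarith : (-1:ℝ) < u) hcon (by linarith : -t < 1)
      have hnt : (-t) / Real.sqrt (1 - (-t) ^ 2) = -Real.sinh (h / 2) := by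
        rw [show (1 - (-t) ^ 2) = 1 - t ^ 2 by ring, neg_div, hgt]
      rw [hnt] at hg
      rw [hsD_def] at hkey
      linarith
    · intro hut
      intro z hz
      rw [hxp, hxm, hsqrt_eq]
      obtain ⟨hz0, hz2⟩ := hz
      have hden : (0:ℝ) < 1 + z ^ 2 / 8 := by positivity
      set w := z / (1 + z ^ 2 / 8) with hw_def
      have hw0 : 0 ≤ w := div_nonneg hz0 hden.le
      have hw2 : w ≤ Real.sqrt 2 := by
        rw [hw_def, div_le_iff₀ hden]
        nlinarith [sq_nonneg (z - 2 * Real.sqrt 2)]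
      have hkey : -Real.sinh (h / 2) < u / sD := by
        have hg := g_strict_mono (by linarith : (-1:ℝ) < -t) hut hu2
        have hnt : (-t) / Real.sqrt (1 - (-t) ^ 2) = -Real.sinh (h / 2) := by
          rw [show (1 - (-t) ^ 2) = 1 - t ^ 2 by ring, neg_div, hgt]
        rw [hnt] at hg
        rw [hsD_def]
        exact hg
      have goal_suff : -(h / 2) < Real.arsinh (u / (Real.sqrt 2 * sD) * w) := by
        rcases le_or_gt 0 u with h0u | h0u
        · have : 0 ≤ u / (Real.sqrt 2 * sD) * w := by positivity
          have := Real.arsinh_le_arsinh.mpr this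
          rw [Real.arsinh_zero] at this
          linarith
        · have hc : u / (Real.sqrt 2 * sD) < 0 := div_neg_of_neg_of_pos h0u (by positivity)
          have hmul : u / (Real.sqrt 2 * sD) * Real.sqrt 2 ≤ u / (Real.sqrt 2 * sD) * w :=
            mul_le_mul_of_nonpos_left hw2 hc.le
          have hE : u / (Real.sqrt 2 * sD) * Real.sqrt 2 = u / sD := by
            field_simp
          rw [hE] at hmul
          have h1 : -(h/2) < Real.arsinh (u / sD) := by
            rw [show -(h/2) = Real.arsinh (Real.sinh (-(h/2))) from (Real.arsinh_sinh _).symm,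
              Real.sinh_neg]
            exact Real.arsinh_lt_arsinh.mpr hkey
          have h2 := Real.arsinh_le_arsinh.mpr hmul
          linarith
      linarith
  refine ⟨hmain, hmain.trans ?_⟩
  rw [div_lt_iff₀ hR, mul_comm]
end
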